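/- arXiv:2503.12909 — 11 statements merged into one kernel-verified Lean document; each statement's English description precedes it below -/
import Mathlib

section
/- For every finite simple graph G, the sigma index σ(G) is an even integer, i.e. 2 divides Σ_{uv∈E(G)} (d(u) − d(v))². -/
open Finset

/-- Vertex degree, with classical decidability of adjacency. -/
noncomputable def deg {V : Type*} [Fintype V] (G : SimpleGraph V) (v : V) : ℕ :=
  letI : DecidableRel G.Adj := Classical.decRel _
  G.degree v

/-- The sigma index `σ(G) = Σ_{uv ∈ E(G)} (d(u) − d(v))²`. -/
noncomputable def sigmaIndex {V : Type*} [Fintype V] (G : SimpleGraph V) : ℤ :=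
  letI := Classical.decEq V
  letI : DecidableRel G.Adj := Classical.decRel _
  ∑ e ∈ G.edgeFinset,
    Sym2.lift ⟨fun u v => ((deg G u : ℤ) - (deg G v : ℤ)) ^ 2, fun u v => by ring⟩ e

/-- The Albertson index `irr(G) = Σ_{uv ∈ E(G)} |d(u) − d(v)|`. -/
noncomputable def albertson {V : Type*} [Fintype V] (G : SimpleGraph V) : ℤ :=
  letI := Classical.decEq V
  letI : DecidableRel G.Adj := Classical.decRel _
  ∑ e ∈ G.edgeFinset,
    Sym2.lift ⟨fun u v => |(deg G u : ℤ) - (deg G v : ℤ)|, fun u v => by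
      simp [abs_sub_comm]⟩ e

/-- For every finite simple graph `G`, the sigma index `σ(G)` is an even integer. -/
theorem two_dvd_sigmaIndex {V : Type*} [Fintype V] (G : SimpleGraph V) :
    2 ∣ sigmaIndex G := by
  letI := Classical.decEq V
  letI : DecidableRel G.Adj := Classical.decRel _
  suffices h : ((sigmaIndex G : ℤ) : ZMod 2) = 0 by
    exact_mod_cast (ZMod.intCast_zmod_eq_zero_iff_dvd _ 2).mp h
  unfold sigmaIndex
  push_cast
  have key : ∀ e ∈ G.edgeFinset,
      ((Sym2.lift ⟨fun u v => ((deg G u : ℤ) - (deg G v : ℤ)) ^ 2, fun u v => by ring⟩ e : ℤ) : ZMod 2)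
        = ∑ w : V, if w ∈ e then ((deg G w : ZMod 2)) else 0 := by
    intro e he
    induction e using Sym2.ind with
    | _ u v =>
      have hadj : G.Adj u v := by
        rwa [SimpleGraph.mem_edgeFinset, SimpleGraph.mem_edgeSet] at he
      have hne : u ≠ v := hadj.ne
      have hsum : (∑ w : V, if w ∈ s(u, v) then ((deg G w : ZMod 2)) else 0)
          = (deg G u : ZMod 2) + (deg G v : ZMod 2) := by
        simp only [Sym2.mem_iff]
        have hx : ∀ x : V, (if x = u ∨ x = v then (deg G x : ZMod 2) else 0)
            = if x ∈ ({u, v} : Finset V) then (deg G x : ZMod 2) else 0 := by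
          intro x; simp [Finset.mem_insert]
        rw [Finset.sum_congr rfl fun x _ => hx x, Finset.sum_ite_mem,
          Finset.univ_inter, Finset.sum_pair hne]
      rw [hsum, Sym2.lift_mk]
      push_cast
      generalize (deg G u : ZMod 2) = a
      generalize (deg G v : ZMod 2) = b
      revert a b; decide
  rw [Finset.sum_congr rfl key, Finset.sum_comm]
  have step : ∀ w : V, (∑ e ∈ G.edgeFinset, if w ∈ e then (deg G w : ZMod 2) else 0)
      = (deg G w : ZMod 2) * (deg G w : ZMod 2) := by
    intro w
    rw [Finset.sum_ite, Finset.sum_const, Finset.sum_const_zero, add_zero,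
      ← SimpleGraph.incidenceFinset_eq_filter, SimpleGraph.card_incidenceFinset_eq_degree,
      nsmul_eq_mul]
    rfl
  rw [Finset.sum_congr rfl fun w _ => step w]
  have sq : ∀ a : ZMod 2, a * a = a := by decide
  rw [Finset.sum_congr rfl fun w _ => sq _]
  have : (∑ w : V, (deg G w : ZMod 2)) = ((∑ w : V, G.degree w : ℕ) : ZMod 2) := by
    push_cast; rfl
  rw [this, SimpleGraph.sum_degrees_eq_twice_card_edges]
  push_cast
  exact mul_eq_zero_of_left (by decide) _
end

section
/- Let T be a tree on n vertices (n ≥ 2). Then irr(T) ≤ (n − 1)(n − 2), and equality holds if and only if T is isomorphic to the star S_n on n vertices. -/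
open Finset

set_option linter.unusedSectionVars false
set_option linter.unusedVariables false

lemma deg_eq {V : Type*} [Fintype V] (G : SimpleGraph V) [DecidableRel G.Adj] (v : V) :
    deg G v = G.degree v := by
  unfold deg
  congr!

lemma albertson_eq {V : Type*} [Fintype V] [DecidableEq V] (G : SimpleGraph V)
    [DecidableRel G.Adj] :
    albertson G = ∑ e ∈ G.edgeFinset,
      Sym2.lift ⟨fun u v => |(G.degree u : ℤ) - (G.degree v : ℤ)|, fun u v => by
        simp [abs_sub_comm]⟩ e := by
  unfold albertson
  refine Finset.sum_congr (Finset.coe_injective (by simp)) ?_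
  intro e he
  induction e using Sym2.ind with
  | _ u v => simp only [Sym2.lift_mk, deg_eq]

section star
variable {V : Type*} [Fintype V] [DecidableEq V] {T : SimpleGraph V} [DecidableRel T.Adj] {c : V}
  {n : ℕ}

/-- `T` is the star centered at `c`. -/
def IsStarAt (T : SimpleGraph V) (c : V) : Prop :=
  ∀ u v, T.Adj u v ↔ u ≠ v ∧ (u = c ∨ v = c)

lemma IsStarAt.nbr_center (h : IsStarAt T c) : T.neighborFinset c = univ.erase c := by
  ext v
  rw [SimpleGraph.mem_neighborFinset, h c v, mem_erase]
  constructor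
  · rintro ⟨h1, -⟩; exact ⟨fun hv => h1 hv.symm, mem_univ v⟩
  · rintro ⟨hv, -⟩; exact ⟨fun hv' => hv hv'.symm, Or.inl rfl⟩

lemma IsStarAt.deg_center (h : IsStarAt T c) : T.degree c = Fintype.card V - 1 := by
  rw [SimpleGraph.degree, h.nbr_center, card_erase_of_mem (mem_univ c), card_univ]

lemma IsStarAt.nbr_leaf (h : IsStarAt T c) {v : V} (hv : v ≠ c) :
    T.neighborFinset v = {c} := by
  ext u
  simp only [SimpleGraph.mem_neighborFinset, h v u, mem_singleton]
  constructor
  · rintro ⟨h1, h2 | h2⟩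
    · exact absurd h2 hv
    · exact h2
  · rintro rfl; exact ⟨hv, Or.inr rfl⟩

lemma IsStarAt.deg_leaf (h : IsStarAt T c) {v : V} (hv : v ≠ c) : T.degree v = 1 := by
  rw [SimpleGraph.degree, h.nbr_leaf hv, card_singleton]

/-- A vertex of full degree in a tree makes it a star. -/
lemma isStarAt_of_deg (hT : T.IsTree) (hdeg : T.degree c = Fintype.card V - 1) :
    IsStarAt T c := by
  have hpos : 0 < Fintype.card V := Fintype.card_pos_iff.mpr ⟨c⟩
  have hnbr : T.neighborFinset c = univ.erase c := by
    apply Finset.eq_of_subset_of_card_le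
    · intro v hv
      rw [SimpleGraph.mem_neighborFinset] at hv
      exact mem_erase.mpr ⟨hv.ne', mem_univ v⟩
    · rw [card_erase_of_mem (mem_univ c), card_univ, ← hdeg, SimpleGraph.degree]
  have hadjc : ∀ v : V, T.Adj c v ↔ v ≠ c := by
    intro v
    rw [← SimpleGraph.mem_neighborFinset, hnbr, mem_erase]
    simp
  have hScard : ((univ.erase c).image (fun v => s(c, v))).card = Fintype.card V - 1 := by
    rw [Finset.card_image_of_injective _ (fun a b hab => Sym2.congr_right.mp hab),
      card_erase_of_mem (mem_univ c), card_univ]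
  have hSsub : ((univ.erase c).image (fun v => s(c, v))) ⊆ T.edgeFinset := by
    intro e he
    rw [mem_image] at he
    obtain ⟨v, hv, rfl⟩ := he
    rw [SimpleGraph.mem_edgeFinset, SimpleGraph.mem_edgeSet]
    exact (hadjc v).mpr (mem_erase.mp hv).1
  have hEcard : T.edgeFinset.card + 1 = Fintype.card V := hT.card_edgeFinset
  have hSeq : ((univ.erase c).image (fun v => s(c, v))) = T.edgeFinset := by
    apply Finset.eq_of_subset_of_card_le hSsub
    rw [hScard]; omega
  intro u v
  constructor
  · intro huv
    refine ⟨huv.ne, ?_⟩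
    have hmem : s(u, v) ∈ T.edgeFinset := by
      rw [SimpleGraph.mem_edgeFinset, SimpleGraph.mem_edgeSet]; exact huv
    rw [← hSeq, mem_image] at hmem
    obtain ⟨w, -, hw⟩ := hmem
    have : c ∈ s(u, v) := hw ▸ Sym2.mem_mk_left c w
    rw [Sym2.mem_iff] at this
    tauto
  · rintro ⟨hne, rfl | rfl⟩
    · exact (hadjc v).mpr (fun hv => hne hv.symm)
    · exact ((hadjc u).mpr hne).symm

lemma term_bound (hn : 2 ≤ n) (hcard : Fintype.card V = n) {u v : V} (huv : T.Adj u v) :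
    |(T.degree u : ℤ) - (T.degree v : ℤ)| ≤ (n : ℤ) - 2 := by
  have h1 : T.degree u < n := hcard ▸ T.degree_lt_card_verts u
  have h2 : T.degree v < n := hcard ▸ T.degree_lt_card_verts v
  have h3 : 0 < T.degree u := T.degree_pos_iff_exists_adj u |>.mpr ⟨v, huv⟩
  have h4 : 0 < T.degree v := T.degree_pos_iff_exists_adj v |>.mpr ⟨u, huv.symm⟩
  rw [abs_sub_le_iff]
  omega

lemma albertson_le (hn : 2 ≤ n) (hcard : Fintype.card V = n) (hT : T.IsTree) :
    albertson T ≤ ((n : ℤ) - 1) * ((n : ℤ) - 2) := by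
  rw [albertson_eq]
  have hEcard : T.edgeFinset.card + 1 = n := hcard ▸ hT.card_edgeFinset
  calc _ ≤ T.edgeFinset.card • ((n : ℤ) - 2) := by
        apply Finset.sum_le_card_nsmul
        intro e he
        induction e using Sym2.ind with
        | _ u v =>
          rw [SimpleGraph.mem_edgeFinset, SimpleGraph.mem_edgeSet] at he
          rw [Sym2.lift_mk]
          exact term_bound hn hcard he
    _ = ((n : ℤ) - 1) * ((n : ℤ) - 2) := by
        rw [nsmul_eq_mul]
        congr 1
        omega

lemma star_albertson (hn : 2 ≤ n) (hcard : Fintype.card V = n) (hT : T.IsTree)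
    (h : IsStarAt T c) : albertson T = ((n : ℤ) - 1) * ((n : ℤ) - 2) := by
  rw [albertson_eq]
  have hEcard : T.edgeFinset.card + 1 = n := hcard ▸ hT.card_edgeFinset
  have hterm : ∀ e ∈ T.edgeFinset,
      (Sym2.lift ⟨fun u v => |(T.degree u : ℤ) - (T.degree v : ℤ)|, fun u v => by
        simp [abs_sub_comm]⟩) e = (n : ℤ) - 2 := by
    intro e he
    induction e using Sym2.ind with
    | _ u v =>
      rw [SimpleGraph.mem_edgeFinset, SimpleGraph.mem_edgeSet] at he
      have hne := he.ne
      rw [Sym2.lift_mk]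
      show |(T.degree u : ℤ) - (T.degree v : ℤ)| = (n : ℤ) - 2
      obtain ⟨-, hc | hc⟩ := (h u v).mp he
      · subst hc
        have hdc : T.degree u = n - 1 := by rw [h.deg_center, hcard]
        have hdl : T.degree v = 1 := h.deg_leaf (fun hv => hne hv.symm)
        rw [hdc, hdl, abs_of_nonneg (by omega)]
        omega
      · subst hc
        have hdc : T.degree v = n - 1 := by rw [h.deg_center, hcard]
        have hdl : T.degree u = 1 := h.deg_leaf hne
        rw [hdc, hdl, abs_of_nonpos (by omega)]
        omega
  rw [Finset.sum_congr rfl hterm, Finset.sum_const, nsmul_eq_mul]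
  congr 1
  omega

lemma exists_center (hn : 2 ≤ n) (hcard : Fintype.card V = n) (hT : T.IsTree)
    (heq : albertson T = ((n : ℤ) - 1) * ((n : ℤ) - 2)) : ∃ c, IsStarAt T c := by
  rw [albertson_eq] at heq
  have hEcard : T.edgeFinset.card + 1 = n := hcard ▸ hT.card_edgeFinset
  have hsum0 : ∑ e ∈ T.edgeFinset,
      (((n : ℤ) - 2) - (Sym2.lift ⟨fun u v => |(T.degree u : ℤ) - (T.degree v : ℤ)|,
        fun u v => by simp [abs_sub_comm]⟩) e) = 0 := by
    rw [Finset.sum_sub_distrib, heq, Finset.sum_const, nsmul_eq_mul,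
      show (T.edgeFinset.card : ℤ) = (n : ℤ) - 1 by omega]
    ring
  have hall := (Finset.sum_eq_zero_iff_of_nonneg (fun e he => by
    induction e using Sym2.ind with
    | _ u v =>
      rw [SimpleGraph.mem_edgeFinset, SimpleGraph.mem_edgeSet] at he
      rw [Sym2.lift_mk]
      exact sub_nonneg.mpr (term_bound hn hcard he))).mp hsum0
  obtain ⟨e0, he0⟩ : T.edgeFinset.Nonempty := Finset.card_pos.mp (by omega)
  induction e0 using Sym2.ind with
  | _ u v =>
    have hval := hall _ he0
    rw [Sym2.lift_mk, sub_eq_zero] at hval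
    have hval' : ((n : ℤ) - 2) = |(T.degree u : ℤ) - (T.degree v : ℤ)| := hval
    rw [SimpleGraph.mem_edgeFinset, SimpleGraph.mem_edgeSet] at he0
    have h1 : T.degree u < n := hcard ▸ T.degree_lt_card_verts u
    have h2 : T.degree v < n := hcard ▸ T.degree_lt_card_verts v
    have h3 : 0 < T.degree u := T.degree_pos_iff_exists_adj u |>.mpr ⟨v, he0⟩
    have h4 : 0 < T.degree v := T.degree_pos_iff_exists_adj v |>.mpr ⟨u, he0.symm⟩
    rcases abs_cases ((T.degree u : ℤ) - (T.degree v : ℤ)) with ⟨ha, -⟩ | ⟨ha, -⟩ <;>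
      rw [ha] at hval'
    · exact ⟨u, isStarAt_of_deg hT (by rw [hcard]; omega)⟩
    · exact ⟨v, isStarAt_of_deg hT (by rw [hcard]; omega)⟩

lemma star_iso (hn : 2 ≤ n) (hcard : Fintype.card V = n) (h : IsStarAt T c) :
    Nonempty (T ≃g completeBipartiteGraph (Fin 1) (Fin (n - 1))) := by
  have h1 : Fintype.card {x : V // x = c} = 1 := Fintype.card_subtype_eq c
  have h2 : Fintype.card {x : V // ¬x = c} = n - 1 := by
    rw [Fintype.card_subtype_compl, Fintype.card_subtype_eq, hcard]
  let e : V ≃ (Fin 1 ⊕ Fin (n - 1)) :=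
    (Equiv.sumCompl (· = c)).symm.trans
      (Equiv.sumCongr (Fintype.equivFinOfCardEq h1) (Fintype.equivFinOfCardEq h2))
  have hleft : ∀ u : V, (e u).isLeft = true ↔ u = c := by
    intro u
    by_cases hu : u = c
    · simp [e, Equiv.sumCompl_symm_apply_of_pos hu, hu]
    · simp [e, Equiv.sumCompl_symm_apply_of_neg hu, hu]
  have hchar : ∀ u v : V,
      (completeBipartiteGraph (Fin 1) (Fin (n - 1))).Adj (e u) (e v) ↔
        ((u = c ∧ v ≠ c) ∨ (u ≠ c ∧ v = c)) := by
    intro u v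
    have h1' := hleft u
    have h2' := hleft v
    rcases hxu : e u with x | x <;> rcases hxv : e v with y | y <;>
      rw [hxu] at h1' <;> rw [hxv] at h2' <;> simp_all [completeBipartiteGraph]
  refine ⟨⟨e, ?_⟩⟩
  intro u v
  rw [hchar, h u v]
  constructor
  · rintro (⟨rfl, hv⟩ | ⟨hu, rfl⟩)
    · exact ⟨fun hEq => hv hEq.symm, Or.inl rfl⟩
    · exact ⟨hu, Or.inr rfl⟩
  · rintro ⟨hne, rfl | rfl⟩
    · exact Or.inl ⟨rfl, fun hv => hne hv.symm⟩
    · exact Or.inr ⟨hne, rfl⟩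

lemma star_of_iso {m : ℕ} (φ : T ≃g completeBipartiteGraph (Fin 1) (Fin m)) :
    IsStarAt T (φ.symm (Sum.inl 0)) := by
  set c := φ.symm (Sum.inl 0) with hc
  have key : ∀ u : V, φ u = Sum.inl 0 ↔ u = c := by
    intro u
    rw [hc]
    constructor
    · intro h; rw [← h]; exact (φ.toEquiv.symm_apply_apply u).symm
    · intro h; rw [h]; exact φ.toEquiv.apply_symm_apply _
  intro u v
  rw [← φ.map_rel_iff]
  constructor
  · intro hadj
    have hne' : u ≠ v := fun h => (SimpleGraph.Adj.ne hadj) (congrArg φ h)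
    refine ⟨hne', ?_⟩
    rcases hx : φ u with x | x
    · exact Or.inl ((key u).mp (by rw [hx, Subsingleton.elim x 0]))
    · rcases hy : φ v with y | y
      · exact Or.inr ((key v).mp (by rw [hy, Subsingleton.elim y 0]))
      · exfalso; rw [hx, hy] at hadj; simp [completeBipartiteGraph] at hadj
  · rintro ⟨hne', hu | hv⟩
    · have h1 : φ u = Sum.inl 0 := (key u).mpr hu
      have hvc : v ≠ c := fun h => hne' (hu.trans h.symm)
      rcases hy : φ v with y | y
      · exact absurd ((key v).mp (by rw [hy, Subsingleton.elim y 0])) hvc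
      · rw [h1]; simp [completeBipartiteGraph]
    · have h1 : φ v = Sum.inl 0 := (key v).mpr hv
      have huc : u ≠ c := fun h => hne' (h.trans hv.symm)
      rcases hy : φ u with y | y
      · exact absurd ((key u).mp (by rw [hy, Subsingleton.elim y 0])) huc
      · rw [h1]; simp [completeBipartiteGraph]

end star

/-- For a tree `T` on `n ≥ 2` vertices, `irr(T) ≤ (n−1)(n−2)`, with equality
iff `T` is isomorphic to the star `S_n = K_{1,n−1}`. -/
theorem albertson_tree_le (n : ℕ) (hn : 2 ≤ n) {V : Type*} [Fintype V]
    (hcard : Fintype.card V = n) (T : SimpleGraph V) (hT : T.IsTree) :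
    albertson T ≤ ((n : ℤ) - 1) * ((n : ℤ) - 2) ∧
      (albertson T = ((n : ℤ) - 1) * ((n : ℤ) - 2) ↔
        Nonempty (T ≃g completeBipartiteGraph (Fin 1) (Fin (n - 1)))) := by
  letI := Classical.decEq V
  letI : DecidableRel T.Adj := Classical.decRel _
  refine ⟨albertson_le hn hcard hT, ?_, ?_⟩
  · intro heq
    obtain ⟨c, hc⟩ := exists_center hn hcard hT heq
    exact star_iso hn hcard hc
  · rintro ⟨φ⟩
    exact star_albertson hn hcard hT (star_of_iso φ)
end

section
/- Let G be a simple graph on N vertices whose degree sequence is d_1 ≥ d_2 ≥ … ≥ d_N. Then for every k with 1 ≤ k ≤ N, Σ_{i=1}^{k} d_i ≤ k(k − 1) + Σ_{i=k+1}^{N} min(k, d_i). -/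
open Finset

/-- Erdős–Gallai: if `d_1 ≥ d_2 ≥ … ≥ d_N` is the degree sequence of a simple
graph `G` on `N` vertices, then for every `1 ≤ k ≤ N`,
`Σ_{i=1}^{k} d_i ≤ k(k−1) + Σ_{i=k+1}^{N} min(k, d_i)`. -/
theorem erdos_gallai {V : Type*} [Fintype V] [DecidableEq V] (N : ℕ)
    (hcard : Fintype.card V = N) (G : SimpleGraph V)
    (d : Fin N → ℕ) (hantitone : ∀ i j : Fin N, i ≤ j → d j ≤ d i)
    (e : Fin N ≃ V) (hdeg : ∀ i : Fin N, d i = deg G (e i)) :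
    ∀ k : ℕ, 1 ≤ k → k ≤ N →
      ∑ i ∈ univ.filter (fun i : Fin N => (i : ℕ) < k), d i ≤
        k * (k - 1) + ∑ i ∈ univ.filter (fun i : Fin N => k ≤ (i : ℕ)), min k (d i) := by
  intro k hk1 hkN
  letI : DecidableRel G.Adj := Classical.decRel _
  have hdeg' : ∀ i, d i = G.degree (e i) := fun i => hdeg i
  set A : Finset (Fin N) := univ.filter (fun i : Fin N => (i : ℕ) < k) with hA
  set B : Finset (Fin N) := univ.filter (fun i : Fin N => k ≤ (i : ℕ)) with hB
  have hAcard : A.card = k := by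
    have hEq : A = (Finset.range k).attachFin
        (fun m hm => lt_of_lt_of_le (Finset.mem_range.mp hm) hkN) := by
      ext i
      simp [hA, Finset.mem_attachFin]
    rw [hEq, Finset.card_attachFin, Finset.card_range]
  set S : Finset V := A.image e with hS
  set T : Finset V := B.image e with hT
  have hScard : S.card = k := by
    rw [hS, Finset.card_image_of_injective _ e.injective, hAcard]
  have hdisjAB : Disjoint A B := by
    rw [Finset.disjoint_left]
    intro i hi hib
    simp [hA] at hi
    simp [hB] at hib
    omega
  have hdisj : Disjoint S T :=
    (Finset.disjoint_image e.injective).mpr hdisjAB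
  have hunion : S ∪ T = univ := by
    rw [hS, hT, ← Finset.image_union]
    have : A ∪ B = univ := by
      ext i
      simp [hA, hB, le_or_gt, lt_or_ge]
    rw [this]
    exact Finset.image_univ_equiv e
  -- degree splits
  have hdegsplit : ∀ v : V, G.degree v =
      (S.filter (G.Adj v)).card + (T.filter (G.Adj v)).card := by
    intro v
    rw [← Finset.card_union_of_disjoint (Finset.disjoint_filter_filter hdisj),
      ← Finset.filter_union, hunion, SimpleGraph.degree, SimpleGraph.neighborFinset_eq_filter]
  -- internal bound
  have hinternal : ∀ v ∈ S, (S.filter (G.Adj v)).card ≤ k - 1 := by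
    intro v hv
    have hsub : S.filter (G.Adj v) ⊆ S.erase v := by
      intro w hw
      rw [Finset.mem_filter] at hw
      refine Finset.mem_erase.mpr ⟨fun h => G.irrefl (h ▸ hw.2), hw.1⟩
    calc (S.filter (G.Adj v)).card ≤ (S.erase v).card := Finset.card_le_card hsub
      _ = k - 1 := by rw [Finset.card_erase_of_mem hv, hScard]
  -- swap crossing sum
  have hswap : ∑ v ∈ S, (T.filter (G.Adj v)).card
      = ∑ w ∈ T, (S.filter (G.Adj w)).card := by
    simp only [Finset.card_filter]
    rw [Finset.sum_comm]
    refine Finset.sum_congr rfl fun w _ => Finset.sum_congr rfl fun v _ => ?_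
    simp [G.adj_comm]
  -- crossing bound
  have hcross : ∀ w : V, (S.filter (G.Adj w)).card ≤ min k (G.degree w) := by
    intro w
    refine le_min ?_ ?_
    · exact hScard ▸ Finset.card_filter_le _ _
    · rw [SimpleGraph.degree, SimpleGraph.neighborFinset_eq_filter]
      exact Finset.card_le_card (Finset.filter_subset_filter _ (Finset.subset_univ S))
  -- put together
  have hmain : ∑ v ∈ S, G.degree v ≤ k * (k - 1) + ∑ w ∈ T, min k (G.degree w) := by
    calc ∑ v ∈ S, G.degree v
        = ∑ v ∈ S, (S.filter (G.Adj v)).card + ∑ v ∈ S, (T.filter (G.Adj v)).card := by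
          rw [← Finset.sum_add_distrib]
          exact Finset.sum_congr rfl fun v _ => hdegsplit v
      _ ≤ k * (k - 1) + ∑ w ∈ T, min k (G.degree w) := by
          gcongr with v hv w hw
          · calc ∑ v ∈ S, (S.filter (G.Adj v)).card ≤ ∑ v ∈ S, (k - 1) :=
                Finset.sum_le_sum hinternal
              _ = k * (k - 1) := by rw [Finset.sum_const, hScard, smul_eq_mul]
          · rw [hswap]
            exact Finset.sum_le_sum fun w _ => hcross w
  have h1 : ∑ i ∈ A, d i = ∑ v ∈ S, G.degree v := by
    rw [hS, Finset.sum_image (fun a _ b _ h => e.injective h)]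
    exact Finset.sum_congr rfl fun i _ => hdeg' i
  have h2 : ∑ i ∈ B, min k (d i) = ∑ w ∈ T, min k (G.degree w) := by
    rw [hT, Finset.sum_image (fun a _ b _ h => e.injective h)]
    exact Finset.sum_congr rfl fun i _ => by rw [hdeg' i]
  rw [h1, h2]
  exact hmain
end

section
/- Let n ≥ 2, let p ≥ 1 be a real number, and let d_1, …, d_n be real numbers with 0 ≤ d_i ≤ n − 1 for all i. Then (Σ_{i=1}^{n} d_i^p)^{1/p} ≤ (n − 1)^{1 − 1/p} · Σ_{i=1}^{n} d_i^{1/p}. -/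
open Finset Real
open scoped NNReal

lemma real_rpow_add_le_add_rpow {a b t : ℝ} (ha : 0 ≤ a) (hb : 0 ≤ b)
    (ht0 : 0 ≤ t) (ht1 : t ≤ 1) : (a + b) ^ t ≤ a ^ t + b ^ t := by
  have h := NNReal.rpow_add_le_add_rpow (⟨a, ha⟩ : ℝ≥0) (⟨b, hb⟩ : ℝ≥0) ht0 ht1
  have := NNReal.coe_le_coe.mpr h
  exact Real.rpow_add_le_add_rpow ha hb ht0 ht1

lemma sum_rpow_le_rpow_sum {ι : Type*} (s : Finset ι) (f : ι → ℝ)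
    (hf : ∀ i ∈ s, 0 ≤ f i) {t : ℝ} (ht0 : 0 < t) (ht1 : t ≤ 1) :
    (∑ i ∈ s, f i) ^ t ≤ ∑ i ∈ s, f i ^ t := by
  induction s using Finset.cons_induction with
  | empty => simp [Real.zero_rpow ht0.ne']
  | cons a s ha ih =>
      rw [Finset.sum_cons, Finset.sum_cons]
      have hfa : 0 ≤ f a := hf a (Finset.mem_cons_self a s)
      have hs : 0 ≤ ∑ i ∈ s, f i :=
        Finset.sum_nonneg fun i hi => hf i (Finset.mem_cons_of_mem hi)
      calc (f a + ∑ i ∈ s, f i) ^ t ≤ f a ^ t + (∑ i ∈ s, f i) ^ t :=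
            real_rpow_add_le_add_rpow hfa hs ht0.le ht1
        _ ≤ f a ^ t + ∑ i ∈ s, f i ^ t := by
            gcongr
            exact ih fun i hi => hf i (Finset.mem_cons_of_mem hi)

/-- For `n ≥ 2`, a real exponent `p ≥ 1`, and reals `0 ≤ d_i ≤ n − 1`,
`(Σ d_i^p)^{1/p} ≤ (n−1)^{1−1/p} · Σ d_i^{1/p}` (real powers). -/
theorem power_sum_inequality (n : ℕ) (hn : 2 ≤ n) (p : ℝ) (hp : 1 ≤ p)
    (d : Fin n → ℝ) (h0 : ∀ i, 0 ≤ d i) (h1 : ∀ i, d i ≤ (n : ℝ) - 1) :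
    (∑ i, d i ^ p) ^ (1 / p) ≤
      ((n : ℝ) - 1) ^ (1 - 1 / p) * ∑ i, d i ^ (1 / p) := by
  have hp0 : 0 < p := lt_of_lt_of_le zero_lt_one hp
  have hN : (1 : ℝ) ≤ (n : ℝ) - 1 := by
    have : (2 : ℝ) ≤ (n : ℝ) := by exact_mod_cast hn
    linarith
  have hN0 : (0 : ℝ) ≤ (n : ℝ) - 1 := le_trans zero_le_one hN
  -- Step 1: ∑ d_i^p ≤ (n-1)^(p-1) * ∑ d_i
  have step1 : ∑ i, d i ^ p ≤ ((n : ℝ) - 1) ^ (p - 1) * ∑ i, d i := by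
    rw [Finset.mul_sum]
    apply Finset.sum_le_sum
    intro i _
    have : d i ^ p = d i ^ (p - 1) * d i := by
      nth_rewrite 1 [show p = p - 1 + 1 by ring]
      rw [Real.rpow_add' (h0 i) (by rw [sub_add_cancel]; exact hp0.ne'), Real.rpow_one]
    rw [this]
    apply mul_le_mul_of_nonneg_right _ (h0 i)
    exact Real.rpow_le_rpow (h0 i) (h1 i) (by linarith)
  -- Step 2
  have hsum0 : 0 ≤ ∑ i, d i := Finset.sum_nonneg fun i _ => h0 i
  have step2 : (∑ i, d i ^ p) ^ (1 / p)
      ≤ ((n : ℝ) - 1) ^ (1 - 1 / p) * (∑ i, d i) ^ (1 / p) := by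
    have h := Real.rpow_le_rpow
      (Finset.sum_nonneg fun i _ => Real.rpow_nonneg (h0 i) p) step1
      (le_of_lt (by positivity : (0:ℝ) < 1 / p))
    calc (∑ i, d i ^ p) ^ (1 / p)
        ≤ (((n : ℝ) - 1) ^ (p - 1) * ∑ i, d i) ^ (1 / p) := h
      _ = ((n : ℝ) - 1) ^ (1 - 1 / p) * (∑ i, d i) ^ (1 / p) := by
          rw [Real.mul_rpow (Real.rpow_nonneg hN0 _) hsum0, ← Real.rpow_mul hN0]
          congr 1
          field_simp
  -- Step 3: subadditivity
  have step3 : (∑ i, d i) ^ (1 / p) ≤ ∑ i, d i ^ (1 / p) :=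
    sum_rpow_le_rpow_sum _ _ (fun i _ => h0 i) (by positivity)
      (by rw [div_le_one hp0]; linarith)
  calc (∑ i, d i ^ p) ^ (1 / p)
      ≤ ((n : ℝ) - 1) ^ (1 - 1 / p) * (∑ i, d i) ^ (1 / p) := step2
    _ ≤ ((n : ℝ) - 1) ^ (1 - 1 / p) * ∑ i, d i ^ (1 / p) := by
        gcongr
end

section
/- Let n ≥ 2, let d_1, …, d_n be natural numbers with d_i ≥ 2 for 2 ≤ i ≤ n − 1 and d_1, d_n ≥ 1, and let T be a caterpillar tree with spine degree sequence (d_1, …, d_n). Then irr(T) = (d_1 − 1)² + (d_n − 1)² + Σ_{i=2}^{n−1} (d_i − 1)(d_i − 2) + Σ_{i=1}^{n−1} |d_i − d_{i+1}|. -/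
open Finset

namespace CatAux
open SimpleGraph
variable {V : Type*} (T : SimpleGraph V) (v : ℕ → V)

def spineWalk (i : ℕ) :
    ∀ m : ℕ, (∀ k, k < m → T.Adj (v (i + k)) (v (i + k + 1))) → T.Walk (v i) (v (i + m))
  | 0, _ => Walk.nil
  | (m + 1), h =>
      (spineWalk i m (fun k hk => h k (Nat.lt_succ_of_lt hk))).concat (h m (Nat.lt_succ_self m))

lemma spineWalk_length (i : ℕ) :
    ∀ m (h : ∀ k, k < m → T.Adj (v (i + k)) (v (i + k + 1))),
      (spineWalk T v i m h).length = m
  | 0, _ => rfl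
  | (m + 1), h => by
      simp [spineWalk, Walk.length_concat, spineWalk_length i m]

lemma spineWalk_support (i : ℕ) :
    ∀ m (h : ∀ k, k < m → T.Adj (v (i + k)) (v (i + k + 1))),
      ∀ x ∈ (spineWalk T v i m h).support, ∃ k, k ≤ m ∧ x = v (i + k)
  | 0, _ => by
      intro x hx
      simp [spineWalk] at hx
      exact ⟨0, le_rfl, by simpa using hx⟩
  | (m + 1), h => by
      intro x hx
      rw [spineWalk, Walk.support_concat, List.mem_append] at hx
      rcases hx with hx | hx
      · obtain ⟨k, hk, rfl⟩ := spineWalk_support i m _ x hx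
        exact ⟨k, Nat.le_succ_of_le hk, rfl⟩
      · exact ⟨m + 1, le_rfl, by simpa [Nat.add_assoc] using (List.mem_singleton.1 hx)⟩

lemma spineWalk_isPath {n : ℕ} (hinj : ∀ a b, a < n → b < n → v a = v b → a = b) (i : ℕ) :
    ∀ m (h : ∀ k, k < m → T.Adj (v (i + k)) (v (i + k + 1))), i + m < n →
      (spineWalk T v i m h).IsPath
  | 0, _, _ => by simp [spineWalk]
  | (m + 1), h, hlt => by
      rw [Walk.isPath_def, spineWalk, Walk.support_concat,
        List.nodup_append]
      refine ⟨(Walk.isPath_def _).1 (spineWalk_isPath hinj i m _ (by omega)), by simp, ?_⟩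
      intro x hx y hx' hxy; subst hxy
      obtain ⟨k, hk, rfl⟩ := spineWalk_support T v i m _ x hx
      have : v (i + m + 1) = v (i + k) := by
        simpa [Nat.add_assoc] using (List.mem_singleton.1 hx').symm
      have := hinj _ _ (by omega) (by omega) this
      omega

lemma no_chord (hT : T.IsTree) {n : ℕ}
    (hinj : ∀ a b, a < n → b < n → v a = v b → a = b)
    (hadj : ∀ i, i + 1 < n → T.Adj (v i) (v (i + 1)))
    (i m : ℕ) (hm : 2 ≤ m) (hlt : i + m < n) : ¬ T.Adj (v i) (v (i + m)) := by
  intro hA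
  have hwadj : ∀ k, k < m → T.Adj (v (i + k)) (v (i + k + 1)) := fun k hk =>
    hadj (i + k) (by omega)
  have hW : (spineWalk T v i m hwadj).IsPath := spineWalk_isPath T v hinj i m hwadj hlt
  have hQ : (Walk.cons hA Walk.nil : T.Walk (v i) (v (i + m))).IsPath := by
    rw [Walk.cons_isPath_iff]
    refine ⟨Walk.IsPath.nil, ?_⟩
    simp only [Walk.support_nil, List.mem_singleton]
    intro hEq
    have := hinj _ _ (by omega) (by omega) hEq
    omega
  have := (hT.existsUnique_path (v i) (v (i + m))).unique hW hQ
  have hlen := congrArg Walk.length this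
  rw [spineWalk_length] at hlen
  simp at hlen
  omega

end CatAux

open SimpleGraph in
/-- For a caterpillar tree `T` with spine degree sequence `(d_1, …, d_n)` (here
zero-indexed as `d 0, …, d (n−1)`), the Albertson index equals
`(d_1 − 1)² + (d_n − 1)² + Σ_{i=2}^{n−1} (d_i − 1)(d_i − 2) + Σ_{i=1}^{n−1} |d_i − d_{i+1}|`. -/
theorem albertson_caterpillar {V : Type*} [Fintype V] (T : SimpleGraph V)
    (hT : T.IsTree) (n : ℕ) (hn : 2 ≤ n) (d : ℕ → ℕ)
    (hd0 : 1 ≤ d 0) (hdlast : 1 ≤ d (n - 1))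
    (hdmid : ∀ i, 1 ≤ i → i < n - 1 → 2 ≤ d i)
    (v : ℕ → V)
    (hinj : ∀ i j, i < n → j < n → v i = v j → i = j)
    (hadj : ∀ i, i + 1 < n → T.Adj (v i) (v (i + 1)))
    (hleaf : ∀ w : V, (∀ i, i < n → w ≠ v i) →
      deg T w = 1 ∧ ∃ i, i < n ∧ T.Adj w (v i))
    (hdeg : ∀ i, i < n → deg T (v i) = d i) :
    albertson T = ((d 0 : ℤ) - 1) ^ 2 + ((d (n - 1) : ℤ) - 1) ^ 2 +
      ∑ i ∈ Finset.Ico 1 (n - 1), ((d i : ℤ) - 1) * ((d i : ℤ) - 2) +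
      ∑ i ∈ Finset.range (n - 1), |(d i : ℤ) - (d (i + 1) : ℤ)| := by
  classical
  letI : DecidableRel T.Adj := Classical.decRel _
  have degcard : ∀ x, deg T x = (T.neighborFinset x).card := fun x => rfl
  set f : Sym2 V → ℤ := Sym2.lift ⟨fun a b => |(deg T a : ℤ) - (deg T b : ℤ)|, fun a b => by
        simp [abs_sub_comm]⟩ with hf
  have h0 : albertson T = ∑ e ∈ T.edgeFinset, f e := by
    unfold albertson
    congr!
  -- basic facts
  have hd1 : ∀ i, i < n → 1 ≤ d i := by
    intro i hi
    rcases eq_or_ne i 0 with rfl | h0'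
    · exact hd0
    rcases eq_or_ne i (n - 1) with h | h
    · exact h ▸ hdlast
    · exact le_trans (by norm_num) (hdmid i (by omega) (by omega))
  have nochord : ∀ i j, i < n → j < n → T.Adj (v i) (v j) → (j = i + 1 ∨ i = j + 1) := by
    intro i j hi hj hA
    by_contra hc
    push_neg at hc
    have hne : i ≠ j := fun h => T.irrefl (h ▸ hA)
    rcases Nat.lt_or_ge i j with h | h
    · have hij : i + (j - i) = j := by omega
      rw [← hij] at hA
      exact CatAux.no_chord T v hT hinj hadj i (j - i) (by omega) (by omega) hA
    · have hij : j + (i - j) = i := by omega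
      rw [← hij] at hA
      exact CatAux.no_chord T v hT hinj hadj j (i - j) (by omega) (by omega) hA.symm
  have hleafnbr : ∀ w, (∀ i, i < n → w ≠ v i) → ∀ a b, T.Adj w a → T.Adj w b → a = b := by
    intro w hw a b ha hb
    have h1 := (hleaf w hw).1
    rw [degcard] at h1
    obtain ⟨c, hc⟩ := Finset.card_eq_one.1 h1
    have ha' : a ∈ T.neighborFinset w := (T.mem_neighborFinset w a).2 ha
    have hb' : b ∈ T.neighborFinset w := (T.mem_neighborFinset w b).2 hb
    rw [hc, Finset.mem_singleton] at ha' hb'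
    rw [ha', hb']
  -- the sets
  set spine : Finset V := (Finset.range n).image v with hspine
  have mem_spine : ∀ x, x ∈ spine ↔ ∃ i, i < n ∧ x = v i := by
    intro x
    simp only [hspine, Finset.mem_image, Finset.mem_range]
    constructor
    · rintro ⟨i, hi, rfl⟩; exact ⟨i, hi, rfl⟩
    · rintro ⟨i, hi, rfl⟩; exact ⟨i, hi, rfl⟩
  set S : Finset (Sym2 V) := (Finset.range (n - 1)).image (fun i => s(v i, v (i + 1))) with hS
  set L : ℕ → Finset (Sym2 V) :=
    fun i => (T.neighborFinset (v i) \ spine).image (fun w => s(w, v i)) with hL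
  set B : Finset (Sym2 V) := (Finset.range n).biUnion L with hB
  -- coverage
  have hcover : T.edgeFinset = S ∪ B := by
    ext e
    refine Sym2.inductionOn e ?_
    intro a b
    simp only [mem_edgeFinset, mem_edgeSet, Finset.mem_union]
    constructor
    · intro hab
      by_cases haS : ∃ i, i < n ∧ a = v i
      · by_cases hbS : ∃ j, j < n ∧ b = v j
        · obtain ⟨i, hi, rfl⟩ := haS
          obtain ⟨j, hj, rfl⟩ := hbS
          left
          rcases nochord i j hi hj hab with rfl | rfl
          · exact Finset.mem_image.2 ⟨i, Finset.mem_range.2 (by omega), rfl⟩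
          · refine Finset.mem_image.2 ⟨j, Finset.mem_range.2 (by omega), ?_⟩
            rw [Sym2.eq_swap]
        · push_neg at hbS
          obtain ⟨_, i, hi, hAi⟩ := hleaf b hbS
          have : a = v i := hleafnbr b hbS a (v i) hab.symm hAi
          subst this
          right
          refine Finset.mem_biUnion.2 ⟨i, Finset.mem_range.2 hi, ?_⟩
          refine Finset.mem_image.2 ⟨b, ?_, Sym2.eq_swap⟩
          refine Finset.mem_sdiff.2 ⟨(T.mem_neighborFinset _ _).2 hab, ?_⟩
          intro hb
          obtain ⟨j, hj, rfl⟩ := (mem_spine b).1 hb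
          exact hbS j hj rfl
      · push_neg at haS
        obtain ⟨_, i, hi, hAi⟩ := hleaf a haS
        have : b = v i := hleafnbr a haS b (v i) hab hAi
        subst this
        right
        refine Finset.mem_biUnion.2 ⟨i, Finset.mem_range.2 hi, ?_⟩
        refine Finset.mem_image.2 ⟨a, ?_, rfl⟩
        refine Finset.mem_sdiff.2 ⟨(T.mem_neighborFinset _ _).2 hab.symm, ?_⟩
        intro ha
        obtain ⟨j, hj, rfl⟩ := (mem_spine a).1 ha
        exact haS j hj rfl
    · intro h
      rcases h with h | h
      · obtain ⟨i, hi, he⟩ := Finset.mem_image.1 h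
        rw [Finset.mem_range] at hi
        have hAi := hadj i (by omega)
        rcases Sym2.eq_iff.1 he with ⟨rfl, rfl⟩ | ⟨rfl, rfl⟩
        · exact hAi
        · exact hAi.symm
      · obtain ⟨i, _, he⟩ := Finset.mem_biUnion.1 h
        obtain ⟨w, hw, he'⟩ := Finset.mem_image.1 he
        have hw' := Finset.mem_sdiff.1 hw
        have hAw : T.Adj w (v i) := ((T.mem_neighborFinset _ _).1 hw'.1).symm
        rcases Sym2.eq_iff.1 he' with ⟨rfl, rfl⟩ | ⟨rfl, rfl⟩
        · exact hAw
        · exact hAw.symm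
  -- disjointness
  have hdisjSB : Disjoint S B := by
    rw [Finset.disjoint_left]
    intro e heS heB
    obtain ⟨i, hi, hei⟩ := Finset.mem_image.1 heS
    obtain ⟨j, hj, hej⟩ := Finset.mem_biUnion.1 heB
    obtain ⟨w, hw, hew⟩ := Finset.mem_image.1 hej
    have hwn : w ∉ spine := (Finset.mem_sdiff.1 hw).2
    rw [Finset.mem_range] at hi hj
    have hEq : s(v i, v (i+1)) = s(w, v j) := hei.trans hew.symm
    rcases Sym2.eq_iff.1 hEq with ⟨h1, h2⟩ | ⟨h1, h2⟩
    · exact hwn ((mem_spine w).2 ⟨i, by omega, h1.symm⟩)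
    · exact hwn ((mem_spine w).2 ⟨i+1, by omega, h2.symm⟩)
  have hpair : (↑(Finset.range n) : Set ℕ).PairwiseDisjoint L := by
    intro i hi j hj hij
    simp only [Finset.coe_range, Set.mem_Iio] at hi hj
    rw [Function.onFun, Finset.disjoint_left]
    intro e hei hej
    obtain ⟨w, hw, hew⟩ := Finset.mem_image.1 hei
    obtain ⟨w', hw', hew'⟩ := Finset.mem_image.1 hej
    have hwn : w ∉ spine := (Finset.mem_sdiff.1 hw).2
    have hEq : s(w, v i) = s(w', v j) := hew.trans hew'.symm
    rcases Sym2.eq_iff.1 hEq with ⟨h1, h2⟩ | ⟨h1, h2⟩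
    · exact hij (hinj i j hi hj h2)
    · exact hwn ((mem_spine w).2 ⟨j, hj, h1⟩)
  have hsum : albertson T = (∑ e ∈ S, f e) + ∑ i ∈ Finset.range n, ∑ e ∈ L i, f e := by
    rw [h0, hcover, Finset.sum_union hdisjSB, hB, Finset.sum_biUnion hpair]
  -- spine sum
  have hSsum : ∑ e ∈ S, f e = ∑ i ∈ Finset.range (n-1), |(d i : ℤ) - (d (i+1) : ℤ)| := by
    have hinjS : ∀ x ∈ Finset.range (n-1), ∀ y ∈ Finset.range (n-1),
        s(v x, v (x+1)) = s(v y, v (y+1)) → x = y := by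
      intro i hi j hj hij
      rw [Finset.mem_range] at hi hj
      rcases Sym2.eq_iff.1 hij with ⟨h1, h2⟩ | ⟨h1, h2⟩
      · exact hinj i j (by omega) (by omega) h1
      · have e1 := hinj i (j+1) (by omega) (by omega) h1
        have e2 := hinj (i+1) j (by omega) (by omega) h2
        omega
    rw [hS, Finset.sum_image hinjS]
    refine Finset.sum_congr rfl ?_
    intro i hi
    rw [Finset.mem_range] at hi
    simp only [hf, Sym2.lift_mk]
    rw [hdeg i (by omega), hdeg (i+1) (by omega)]
  -- leaf sums
  have hLsum : ∀ i, i < n →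
      ∑ e ∈ L i, f e = ((T.neighborFinset (v i) \ spine).card : ℤ) * ((d i : ℤ) - 1) := by
    intro i hi
    have hinjL : ∀ x ∈ T.neighborFinset (v i) \ spine, ∀ y ∈ T.neighborFinset (v i) \ spine,
        s(x, v i) = s(y, v i) → x = y := by
      intro a ha b hb hab
      rcases Sym2.eq_iff.1 hab with ⟨h1, _⟩ | ⟨h1, h2⟩
      · exact h1
      · rw [h1, ← h2]
    rw [hL]
    rw [Finset.sum_image hinjL]
    have hval : ∀ w ∈ T.neighborFinset (v i) \ spine,
        f s(w, v i) = (d i : ℤ) - 1 := by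
      intro w hw
      have hwmem := Finset.mem_sdiff.1 hw
      have hwn : ∀ j, j < n → w ≠ v j := by
        intro j hj hEq; exact hwmem.2 ((mem_spine w).2 ⟨j, hj, hEq⟩)
      have hw1 : deg T w = 1 := (hleaf w hwn).1
      simp only [hf, Sym2.lift_mk]
      rw [hw1, hdeg i hi]
      have h1d : (1:ℤ) ≤ (d i : ℤ) := by exact_mod_cast hd1 i hi
      rw [abs_sub_comm, abs_of_nonneg (by omega)]
      norm_num
    rw [Finset.sum_congr rfl hval, Finset.sum_const, nsmul_eq_mul]
  -- neighbor ∩ spine card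
  have hcapcard : ∀ i, i < n →
      (T.neighborFinset (v i) ∩ spine).card = if i = 0 ∨ i = n - 1 then 1 else 2 := by
    intro i hi
    have hmem : ∀ x, x ∈ T.neighborFinset (v i) ∩ spine ↔
        ∃ j, j < n ∧ (j = i+1 ∨ i = j+1) ∧ x = v j := by
      intro x
      rw [Finset.mem_inter, T.mem_neighborFinset, mem_spine]
      constructor
      · rintro ⟨hAx, j, hj, rfl⟩
        exact ⟨j, hj, nochord i j hi hj hAx, rfl⟩
      · rintro ⟨j, hj, hcase, rfl⟩
        refine ⟨?_, j, hj, rfl⟩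
        rcases hcase with rfl | rfl
        · exact hadj i (by omega)
        · exact (hadj j (by omega)).symm
    by_cases h0' : i = 0
    · have hset : T.neighborFinset (v i) ∩ spine = {v 1} := by
        ext x; rw [hmem, Finset.mem_singleton]
        constructor
        · rintro ⟨j, hj, hc, rfl⟩
          have : j = 1 := by omega
          subst this; rfl
        · rintro rfl
          exact ⟨1, by omega, by omega, rfl⟩
      rw [hset, Finset.card_singleton, if_pos (Or.inl h0')]
    by_cases hl' : i = n - 1
    · have hset : T.neighborFinset (v i) ∩ spine = {v (i-1)} := by
        ext x; rw [hmem, Finset.mem_singleton]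
        constructor
        · rintro ⟨j, hj, hc, rfl⟩
          have : j = i - 1 := by omega
          subst this; rfl
        · rintro rfl
          exact ⟨i-1, by omega, by omega, rfl⟩
      rw [hset, Finset.card_singleton, if_pos (Or.inr hl')]
    · have hset : T.neighborFinset (v i) ∩ spine = {v (i-1), v (i+1)} := by
        ext x; rw [hmem]
        simp only [Finset.mem_insert, Finset.mem_singleton]
        constructor
        · rintro ⟨j, hj, hc, rfl⟩
          rcases hc with rfl | h
          · exact Or.inr rfl
          · left; congr 1; omega
        · rintro (rfl | rfl)
          · exact ⟨i-1, by omega, by omega, rfl⟩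
          · exact ⟨i+1, by omega, Or.inl rfl, rfl⟩
      rw [hset, if_neg (by tauto)]
      rw [Finset.card_insert_of_notMem, Finset.card_singleton]
      simp only [Finset.mem_singleton]
      intro hEq
      have := hinj (i-1) (i+1) (by omega) (by omega) hEq
      omega
  have hsd : ∀ i, i < n → ((T.neighborFinset (v i) \ spine).card : ℤ) =
      (d i : ℤ) - (if i = 0 ∨ i = n-1 then (1:ℤ) else 2) := by
    intro i hi
    have h1 : (T.neighborFinset (v i) \ spine).card + (T.neighborFinset (v i) ∩ spine).card
        = (T.neighborFinset (v i)).card := Finset.card_sdiff_add_card_inter _ _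
    rw [hcapcard i hi] at h1
    have h2 : (T.neighborFinset (v i)).card = d i := by rw [← degcard, hdeg i hi]
    rw [h2] at h1
    have hdi := hd1 i hi
    have hdi2 : (¬ (i = 0 ∨ i = n - 1)) → 2 ≤ d i := by
      intro h; exact hdmid i (by omega) (by omega)
    by_cases h : i = 0 ∨ i = n - 1
    · rw [if_pos h] at h1 ⊢; omega
    · rw [if_neg h] at h1 ⊢
      have := hdi2 h
      omega
  -- assembly
  have final : albertson T =
      (∑ i ∈ Finset.range n,
        ((d i:ℤ) - (if i = 0 ∨ i = n-1 then (1:ℤ) else 2)) * ((d i:ℤ) - 1)) +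
      ∑ i ∈ Finset.range (n-1), |(d i:ℤ) - (d (i+1) : ℤ)| := by
    rw [hsum, hSsum, add_comm]
    congr 1
    refine Finset.sum_congr rfl ?_
    intro i hi
    rw [Finset.mem_range] at hi
    rw [hLsum i hi, hsd i hi]
  have hsplit : ∀ g : ℕ → ℤ, ∑ i ∈ Finset.range n, g i
      = g 0 + (∑ i ∈ Finset.Ico 1 (n-1), g i) + g (n-1) := by
    intro g
    rw [Finset.range_eq_Ico,
      ← Finset.sum_Ico_consecutive g (by omega : (0:ℕ) ≤ 1) (by omega : 1 ≤ n),
      ← Finset.sum_Ico_consecutive g (by omega : (1:ℕ) ≤ n - 1) (by omega : n - 1 ≤ n)]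
    have e1 : Finset.Ico 0 1 = {0} := by ext x; simp
    have e2 : Finset.Ico (n-1) n = {n-1} := by ext x; simp; omega
    rw [e1, e2, Finset.sum_singleton, Finset.sum_singleton]
    ring
  rw [final, hsplit]
  have e0 : ((d 0:ℤ) - (if (0:ℕ) = 0 ∨ (0:ℕ) = n-1 then (1:ℤ) else 2)) * ((d 0:ℤ)-1)
      = ((d 0:ℤ)-1)^2 := by rw [if_pos (Or.inl rfl)]; ring
  have en : ((d (n-1):ℤ) - (if n-1 = 0 ∨ n-1 = n-1 then (1:ℤ) else 2)) * ((d (n-1):ℤ)-1)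
      = ((d (n-1):ℤ)-1)^2 := by rw [if_pos (Or.inr rfl)]; ring
  have em : ∑ i ∈ Finset.Ico 1 (n-1),
        ((d i:ℤ) - (if i = 0 ∨ i = n-1 then (1:ℤ) else 2)) * ((d i:ℤ) - 1)
      = ∑ i ∈ Finset.Ico 1 (n-1), ((d i:ℤ)-1)*((d i:ℤ)-2) := by
    refine Finset.sum_congr rfl ?_
    intro i hi
    rw [Finset.mem_Ico] at hi
    rw [if_neg (by omega)]
    ring
  rw [e0, en, em]
  ring
end

section
/- Let n ≥ 2, let d_1 ≥ d_2 ≥ … ≥ d_n be natural numbers with d_i ≥ 2 for 2 ≤ i ≤ n − 1 and d_1, d_n ≥ 1, and let T be a caterpillar tree with spine degree sequence (d_1, …, d_n). Then σ(T) = (d_1 − 1)³ + (d_n − 1)³ + Σ_{i=2}^{n−1} (d_i − 1)²(d_i − 2) + Σ_{i=1}^{n−1} (d_i − d_{i+1})². -/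
open Finset

private lemma spine_walk {V : Type*} {T : SimpleGraph V} {n : ℕ} {v : ℕ → V}
    (hadj : ∀ i, i + 1 < n → T.Adj (v i) (v (i + 1))) :
    ∀ (k i j : ℕ), j = i + k → j < n → ∃ p : T.Walk (v i) (v j),
      p.length = k ∧ p.support = (List.range (k + 1)).map (fun m => v (i + m)) := by
  intro k
  induction k with
  | zero =>
    intro i j hij hj
    subst hij
    exact ⟨SimpleGraph.Walk.nil, by simp, by simp [List.range_succ]⟩
  | succ k ih =>
    intro i j hij hj
    obtain ⟨p, hlen, hsup⟩ := ih (i + 1) j (by omega) hj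
    refine ⟨SimpleGraph.Walk.cons (hadj i (by omega)) p, by simp [hlen], ?_⟩
    rw [SimpleGraph.Walk.support_cons, hsup]
    conv_rhs => rw [List.range_succ_eq_map]
    rw [List.map_cons]
    refine List.cons_eq_cons.mpr ⟨by simp, ?_⟩
    rw [List.map_map]
    apply List.map_congr_left
    intro m _
    simp only [Function.comp_apply]
    congr 1
    omega

/-- For a caterpillar tree `T` with non-increasing spine degree sequence
`(d_1, …, d_n)` (zero-indexed), the sigma index equals
`(d_1 − 1)³ + (d_n − 1)³ + Σ_{i=2}^{n−1} (d_i − 1)²(d_i − 2) + Σ_{i=1}^{n−1} (d_i − d_{i+1})²`. -/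
theorem sigmaIndex_caterpillar {V : Type*} [Fintype V] (T : SimpleGraph V)
    (hT : T.IsTree) (n : ℕ) (hn : 2 ≤ n) (d : ℕ → ℕ)
    (hmono : ∀ i j, i ≤ j → j < n → d j ≤ d i)
    (hd0 : 1 ≤ d 0) (hdlast : 1 ≤ d (n - 1))
    (hdmid : ∀ i, 1 ≤ i → i < n - 1 → 2 ≤ d i)
    (v : ℕ → V)
    (hinj : ∀ i j, i < n → j < n → v i = v j → i = j)
    (hadj : ∀ i, i + 1 < n → T.Adj (v i) (v (i + 1)))
    (hleaf : ∀ w : V, (∀ i, i < n → w ≠ v i) →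
      deg T w = 1 ∧ ∃ i, i < n ∧ T.Adj w (v i))
    (hdeg : ∀ i, i < n → deg T (v i) = d i) :
    sigmaIndex T = ((d 0 : ℤ) - 1) ^ 3 + ((d (n - 1) : ℤ) - 1) ^ 3 +
      ∑ i ∈ Finset.Ico 1 (n - 1), ((d i : ℤ) - 1) ^ 2 * ((d i : ℤ) - 2) +
      ∑ i ∈ Finset.range (n - 1), ((d i : ℤ) - (d (i + 1) : ℤ)) ^ 2 := by
  classical
  have hchord : ∀ i j, i < j → j < n → T.Adj (v i) (v j) → j = i + 1 := by
    intro i j hij hj ha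
    by_contra hne
    obtain ⟨p, hlen, hsup⟩ := spine_walk hadj (j - i) i j (by omega) hj
    have hpath : p.IsPath := by
      rw [SimpleGraph.Walk.isPath_def, hsup]
      refine List.Nodup.map_on ?_ List.nodup_range
      intro x hx y hy hxy
      simp only [List.mem_range] at hx hy
      have := hinj (i + x) (i + y) (by omega) (by omega) hxy
      omega
    have hq : (SimpleGraph.Walk.cons ha SimpleGraph.Walk.nil).IsPath := by
      simp [SimpleGraph.Walk.isPath_def]
      intro h
      exact absurd (hinj i j (by omega) hj h) (by omega)
    have huniqp := hT.IsAcyclic.path_unique ⟨p, hpath⟩ ⟨_, hq⟩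
    have hl : p.length = 1 := by
      have := congrArg (fun q : T.Path (v i) (v j) => q.1.length) huniqp
      simpa using this
    omega
  have hdeg' : ∀ w, deg T w = T.degree w := fun w => by unfold deg; congr!
  -- the sigma index as a sum over our fintype instance
  set f : Sym2 V → ℤ :=
    Sym2.lift ⟨fun u w => ((deg T u : ℤ) - (deg T w : ℤ)) ^ 2, fun u w => by ring⟩ with hf
  have hfmk : ∀ a b : V, f s(a, b) = ((deg T a : ℤ) - (deg T b : ℤ)) ^ 2 := fun a b => rfl
  have hsigma : sigmaIndex T = ∑ e ∈ T.edgeFinset, f e := by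
    unfold sigmaIndex
    congr!
  -- spine vertex set
  set S : Finset V := (Finset.range n).image v with hS
  have hmemS : ∀ u, u ∈ S ↔ ∃ j, j < n ∧ v j = u := by
    intro u; simp [hS, Finset.mem_image, Finset.mem_range, and_comm]
  have hleaf' : ∀ w : V, w ∉ S → deg T w = 1 ∧ ∃ i, i < n ∧ T.Adj w (v i) := by
    intro w hw
    refine hleaf w ?_
    intro i hi he
    exact hw ((hmemS w).mpr ⟨i, hi, he.symm⟩)
  -- a degree-1 vertex has a unique neighbor
  have huniq : ∀ w u u' : V, T.Adj w u → T.Adj w u' → deg T w = 1 → u = u' := by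
    intro w u u' h1 h2 hdw
    rw [hdeg'] at hdw
    obtain ⟨a, ha⟩ := Finset.card_eq_one.mp hdw
    have h1' : u ∈ T.neighborFinset w := by simpa [SimpleGraph.mem_neighborFinset] using h1
    have h2' : u' ∈ T.neighborFinset w := by simpa [SimpleGraph.mem_neighborFinset] using h2
    rw [ha, Finset.mem_singleton] at h1' h2'
    rw [h1', h2']
  -- no two leaves are adjacent
  have hll : ∀ a b : V, a ∉ S → b ∉ S → ¬ T.Adj a b := by
    intro a b ha hb hab
    obtain ⟨hda, i, hi, hia⟩ := hleaf' a ha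
    have := huniq a b (v i) hab hia hda
    exact hb ((hmemS b).mpr ⟨i, hi, this.symm⟩)
  -- edge decomposition
  have hE : T.edgeFinset =
      ((Finset.range (n - 1)).image (fun i => s(v i, v (i + 1)))) ∪
      (Finset.range n).biUnion
        (fun i => ((T.neighborFinset (v i)) \ S).image (fun w => s(w, v i))) := by
    ext e
    induction e using Sym2.ind with
    | _ a b =>
      simp only [SimpleGraph.mem_edgeFinset, SimpleGraph.mem_edgeSet, Finset.mem_union,
        Finset.mem_image, Finset.mem_biUnion, Finset.mem_range, Finset.mem_sdiff,
        SimpleGraph.mem_neighborFinset]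
      constructor
      · intro hab
        by_cases ha : a ∈ S <;> by_cases hb : b ∈ S
        · obtain ⟨i, hi, hia⟩ := (hmemS a).mp ha
          obtain ⟨j, hj, hjb⟩ := (hmemS b).mp hb
          left
          subst hia hjb
          rcases lt_or_gt_of_ne (fun h : i = j => T.ne_of_adj hab (by rw [h])) with h | h
          · have hc := hchord i j h hj hab
            exact ⟨i, by omega, by rw [hc]⟩
          · have hc := hchord j i h hi hab.symm
            refine ⟨j, by omega, ?_⟩
            rw [hc, Sym2.eq_swap]
        · obtain ⟨i, hi, hia⟩ := (hmemS a).mp ha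
          right
          exact ⟨i, hi, ⟨b, ⟨by rw [hia]; exact hab, hb⟩, by rw [hia, Sym2.eq_swap]⟩⟩
        · obtain ⟨j, hj, hjb⟩ := (hmemS b).mp hb
          right
          exact ⟨j, hj, ⟨a, ⟨by rw [hjb]; exact hab.symm, ha⟩, by rw [hjb]⟩⟩
        · exact absurd hab (hll a b ha hb)
      · rintro (⟨i, hi, he⟩ | ⟨i, hi, w, ⟨hw1, hw2⟩, he⟩)
        · rw [Sym2.eq_iff] at he
          rcases he with ⟨h1, h2⟩ | ⟨h1, h2⟩
          · rw [← h1, ← h2]; exact hadj i (by omega)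
          · rw [← h1, ← h2]; exact (hadj i (by omega)).symm
        · rw [Sym2.eq_iff] at he
          rcases he with ⟨h1, h2⟩ | ⟨h1, h2⟩
          · rw [← h1, ← h2]; exact hw1.symm
          · rw [← h1, ← h2]; exact hw1
  -- disjointness of union
  have hdisj : Disjoint ((Finset.range (n - 1)).image (fun i => s(v i, v (i + 1))))
      ((Finset.range n).biUnion
        (fun i => ((T.neighborFinset (v i)) \ S).image (fun w => s(w, v i)))) := by
    rw [Finset.disjoint_left]
    rintro e he1 he2
    simp only [Finset.mem_image, Finset.mem_range, Finset.mem_biUnion, Finset.mem_sdiff,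
      SimpleGraph.mem_neighborFinset] at he1 he2
    obtain ⟨i, hi, hei⟩ := he1
    obtain ⟨j, hj, w, ⟨hw1, hw2⟩, hej⟩ := he2
    rw [← hej, Sym2.eq_iff] at hei
    rcases hei with ⟨h1, h2⟩ | ⟨h1, h2⟩
    · exact hw2 ((hmemS w).mpr ⟨i, by omega, h1⟩)
    · exact hw2 ((hmemS w).mpr ⟨i + 1, by omega, h2⟩)
  -- pairwise disjointness of the biUnion
  have hpair : (↑(Finset.range n) : Set ℕ).PairwiseDisjoint
      (fun i => ((T.neighborFinset (v i)) \ S).image (fun w => s(w, v i))) := by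
    intro i hi j hj hij
    simp only [Finset.coe_range, Set.mem_Iio] at hi hj
    simp only [Function.onFun]
    rw [Finset.disjoint_left]
    rintro e he1 he2
    simp only [Finset.mem_image, Finset.mem_sdiff, SimpleGraph.mem_neighborFinset] at he1 he2
    obtain ⟨w, ⟨hw1, hw2⟩, hew⟩ := he1
    obtain ⟨w', ⟨hw1', hw2'⟩, hew'⟩ := he2
    rw [← hew', Sym2.eq_iff] at hew
    rcases hew with ⟨h1, h2⟩ | ⟨h1, h2⟩
    · exact hij (hinj i j hi hj h2)
    · exact hw2 ((hmemS w).mpr ⟨j, hj, h1.symm⟩)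
  -- spine sum
  have hspine : ∑ e ∈ (Finset.range (n - 1)).image (fun i => s(v i, v (i + 1))), f e
      = ∑ i ∈ Finset.range (n - 1), ((d i : ℤ) - (d (i + 1) : ℤ)) ^ 2 := by
    rw [Finset.sum_image]
    · apply Finset.sum_congr rfl
      intro i hi
      rw [Finset.mem_range] at hi
      rw [hfmk, hdeg i (by omega), hdeg (i + 1) (by omega)]
    · intro i hi j hj he
      rw [Finset.mem_coe, Finset.mem_range] at hi hj
      rw [Sym2.eq_iff] at he
      rcases he with ⟨h1, _⟩ | ⟨h1, h2⟩
      · exact hinj i j (by omega) (by omega) h1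
      · have e1 := hinj i (j + 1) (by omega) (by omega) h1
        have e2 := hinj (i + 1) j (by omega) (by omega) h2
        omega
  -- leaf sums
  have hleafsum : ∀ i, i < n →
      ∑ e ∈ ((T.neighborFinset (v i)) \ S).image (fun w => s(w, v i)), f e
      = ((T.neighborFinset (v i) \ S).card : ℤ) * ((d i : ℤ) - 1) ^ 2 := by
    intro i hi
    rw [Finset.sum_image]
    · rw [Finset.sum_congr rfl (g := fun _ => ((d i : ℤ) - 1) ^ 2) ?_, Finset.sum_const,
        nsmul_eq_mul]
      intro w hw
      simp only [Finset.mem_sdiff, SimpleGraph.mem_neighborFinset] at hw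
      rw [hfmk, (hleaf' w hw.2).1, hdeg i hi]
      ring
    · intro w hw w' hw' he
      rw [Sym2.eq_iff] at he
      rcases he with ⟨h1, _⟩ | ⟨h1, h2⟩
      · exact h1
      · simp only [Finset.mem_coe, Finset.mem_sdiff] at hw
        exact absurd ((hmemS w).mpr ⟨i, hi, h1.symm⟩) hw.2
  -- cardinalities
  have hcard : ∀ i, i < n →
      (T.neighborFinset (v i) \ S).card = d i - (T.neighborFinset (v i) ∩ S).card := by
    intro i hi
    have h1 := Finset.card_sdiff_add_card_inter (T.neighborFinset (v i)) S
    have h2 : (T.neighborFinset (v i)).card = d i := by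
      rw [← hdeg i hi, hdeg']; rfl
    omega
  have hcap0 : T.neighborFinset (v 0) ∩ S = {v 1} := by
    ext u
    simp only [Finset.mem_inter, SimpleGraph.mem_neighborFinset, Finset.mem_singleton]
    constructor
    · rintro ⟨hu1, hu2⟩
      obtain ⟨j, hj, hju⟩ := (hmemS u).mp hu2
      subst hju
      have hj0 : 0 < j := by
        rcases Nat.eq_zero_or_pos j with h | h
        · exact absurd hu1 (by rw [h]; exact T.irrefl)
        · exact h
      have := hchord 0 j hj0 hj hu1
      rw [this]
    · intro hu
      subst hu
      exact ⟨hadj 0 (by omega), (hmemS _).mpr ⟨1, by omega, rfl⟩⟩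
  have hcaplast : T.neighborFinset (v (n - 1)) ∩ S = {v (n - 2)} := by
    ext u
    simp only [Finset.mem_inter, SimpleGraph.mem_neighborFinset, Finset.mem_singleton]
    constructor
    · rintro ⟨hu1, hu2⟩
      obtain ⟨j, hj, hju⟩ := (hmemS u).mp hu2
      subst hju
      have hjn : j < n - 1 := by
        rcases Nat.lt_or_ge j (n - 1) with h | h
        · exact h
        · have : j = n - 1 := by omega
          exact absurd hu1 (by rw [this]; exact T.irrefl)
      have := hchord j (n - 1) hjn (by omega) hu1.symm
      have : j = n - 2 := by omega
      rw [this]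
    · intro hu
      subst hu
      have h2 := hadj (n - 2) (by omega)
      rw [show n - 2 + 1 = n - 1 by omega] at h2
      exact ⟨h2.symm, (hmemS _).mpr ⟨n - 2, by omega, rfl⟩⟩
  have hcapmid : ∀ i, 1 ≤ i → i < n - 1 →
      T.neighborFinset (v i) ∩ S = {v (i - 1), v (i + 1)} := by
    intro i h1 h2
    ext u
    simp only [Finset.mem_inter, SimpleGraph.mem_neighborFinset, Finset.mem_insert,
      Finset.mem_singleton]
    constructor
    · rintro ⟨hu1, hu2⟩
      obtain ⟨j, hj, hju⟩ := (hmemS u).mp hu2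
      subst hju
      have hij : i ≠ j := fun h => absurd hu1 (by rw [h]; exact T.irrefl)
      rcases Nat.lt_or_ge i j with h | h
      · have := hchord i j h hj hu1
        right; rw [this]
      · have hji : j < i := by omega
        have := hchord j i hji (by omega) hu1.symm
        left
        have : j = i - 1 := by omega
        rw [this]
    · rintro (hu | hu) <;> subst hu
      · have ha := hadj (i - 1) (by omega)
        rw [show i - 1 + 1 = i by omega] at ha
        exact ⟨ha.symm, (hmemS _).mpr ⟨i - 1, by omega, rfl⟩⟩
      · exact ⟨hadj i (by omega), (hmemS _).mpr ⟨i + 1, by omega, rfl⟩⟩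
  -- put it together
  rw [hsigma, hE, Finset.sum_union hdisj, Finset.sum_biUnion hpair, hspine]
  have hmain : ∑ i ∈ Finset.range n,
      ∑ e ∈ ((T.neighborFinset (v i)) \ S).image (fun w => s(w, v i)), f e
      = ((d 0 : ℤ) - 1) ^ 3 + ((d (n - 1) : ℤ) - 1) ^ 3 +
        ∑ i ∈ Finset.Ico 1 (n - 1), ((d i : ℤ) - 1) ^ 2 * ((d i : ℤ) - 2) := by
    have hsplit : ∀ g : ℕ → ℤ, ∑ i ∈ Finset.range n, g i
        = g 0 + (∑ i ∈ Finset.Ico 1 (n - 1), g i) + g (n - 1) := by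
      intro g
      rw [Finset.range_eq_Ico, Finset.sum_eq_sum_Ico_succ_bot (by omega) g,
        ← Finset.sum_Ico_consecutive g (by omega : 1 ≤ n - 1) (by omega : n - 1 ≤ n),
        show Finset.Ico (n - 1) n = {n - 1} by
          rw [show n = (n - 1) + 1 by omega]; simp,
        Finset.sum_singleton]
      ring
    rw [hsplit]
    have e0 : ∑ e ∈ ((T.neighborFinset (v 0)) \ S).image (fun w => s(w, v 0)), f e
        = ((d 0 : ℤ) - 1) ^ 3 := by
      rw [hleafsum 0 (by omega), hcard 0 (by omega), hcap0, Finset.card_singleton]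
      have : ((d 0 - 1 : ℕ) : ℤ) = (d 0 : ℤ) - 1 := by
        push_cast [hd0]; ring
      rw [this]; ring
    have elast : ∑ e ∈ ((T.neighborFinset (v (n - 1))) \ S).image (fun w => s(w, v (n - 1))), f e
        = ((d (n - 1) : ℤ) - 1) ^ 3 := by
      rw [hleafsum (n - 1) (by omega), hcard (n - 1) (by omega), hcaplast,
        Finset.card_singleton]
      have : ((d (n - 1) - 1 : ℕ) : ℤ) = (d (n - 1) : ℤ) - 1 := by
        push_cast [hdlast]; ring
      rw [this]; ring
    have emid : ∑ i ∈ Finset.Ico 1 (n - 1),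
        ∑ e ∈ ((T.neighborFinset (v i)) \ S).image (fun w => s(w, v i)), f e
        = ∑ i ∈ Finset.Ico 1 (n - 1), ((d i : ℤ) - 1) ^ 2 * ((d i : ℤ) - 2) := by
      apply Finset.sum_congr rfl
      intro i hi
      rw [Finset.mem_Ico] at hi
      rw [hleafsum i (by omega), hcard i (by omega), hcapmid i hi.1 hi.2]
      have hne : v (i - 1) ≠ v (i + 1) := by
        intro h
        have := hinj (i - 1) (i + 1) (by omega) (by omega) h
        omega
      rw [Finset.card_insert_of_notMem (by simpa using hne), Finset.card_singleton]
      have : ((d i - 2 : ℕ) : ℤ) = (d i : ℤ) - 2 := by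
        have := hdmid i hi.1 hi.2
        push_cast [this]; ring
      rw [this]; ring
    rw [e0, elast, emid]
    ring
  rw [hmain]
  ring
end

section
/- Let d_1 ≥ d_2 ≥ d_3 ≥ 2 be integers and define, for an arrangement (a, b, c) of (d_1, d_2, d_3), f(a, b, c) = (a − 1)² + (c − 1)² + (b − 1)(b − 2) + |a − b| + |b − c| (the Albertson index of the caterpillar whose three spine vertices have degrees a, b, c in this order along the spine). Then for every permutation (a, b, c) of (d_1, d_2, d_3), f(a, b, c) ≥ (d_1 − 1)² + (d_3 − 1)² + (d_2 − 1)(d_2 − 2) + (d_1 − d_3), and this lower bound is attained by the arrangement (d_1, d_2, d_3). -/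
/-- Albertson index of a caterpillar with three spine vertices of degrees `a, b, c`
in order along the spine. -/
def f3 (a b c : ℤ) : ℤ :=
  (a - 1) ^ 2 + (c - 1) ^ 2 + (b - 1) * (b - 2) + |a - b| + |b - c|

lemma cons_cancel {a : ℤ} {s t : Multiset ℤ} (h : a ::ₘ s = a ::ₘ t) : s = t :=
  (Multiset.cons_inj_right a).mp h

lemma sw12 (x y z : ℤ) : ({x, y, z} : Multiset ℤ) = {y, x, z} := Multiset.cons_swap x y {z}

lemma sw23 (x y z : ℤ) : ({x, y, z} : Multiset ℤ) = {x, z, y} :=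
  congrArg (x ::ₘ ·) (Multiset.cons_swap y z 0)

lemma pair_eq {b c y z : ℤ} (h : ({b, c} : Multiset ℤ) = ({y, z} : Multiset ℤ)) :
    (b=y∧c=z)∨(b=z∧c=y) := by
  have hb : b ∈ ({y, z} : Multiset ℤ) := by rw [← h]; simp
  simp only [Multiset.insert_eq_cons, Multiset.mem_cons, Multiset.mem_singleton] at hb
  rcases hb with rfl | rfl
  · left; exact ⟨rfl, Multiset.singleton_inj.mp (cons_cancel h)⟩
  · rw [Multiset.pair_comm y b] at h
    right; exact ⟨rfl, Multiset.singleton_inj.mp (cons_cancel h)⟩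

lemma triple_eq {a b c x y z : ℤ} (h : ({a, b, c} : Multiset ℤ) = ({x, y, z} : Multiset ℤ)) :
    (a=x∧b=y∧c=z)∨(a=x∧b=z∧c=y)∨(a=y∧b=x∧c=z)∨(a=y∧b=z∧c=x)∨(a=z∧b=x∧c=y)∨(a=z∧b=y∧c=x) := by
  have ha : a ∈ ({x, y, z} : Multiset ℤ) := by rw [← h]; simp
  simp only [Multiset.insert_eq_cons, Multiset.mem_cons, Multiset.mem_singleton] at ha
  rcases ha with rfl | rfl | rfl
  · have := pair_eq (cons_cancel h); tauto
  · rw [sw12 x a z] at h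
    have := pair_eq (cons_cancel h); tauto
  · rw [sw23 x y a, sw12 x a y] at h
    have := pair_eq (cons_cancel h); tauto

/-- For `d₁ ≥ d₂ ≥ d₃ ≥ 2`, every arrangement `(a,b,c)` of `(d₁,d₂,d₃)` satisfies
`f(a,b,c) ≥ (d₁−1)² + (d₃−1)² + (d₂−1)(d₂−2) + (d₁−d₃)`, and equality is attained
by `(d₁,d₂,d₃)`. -/
theorem f3_lower_bound (d₁ d₂ d₃ : ℤ) (h12 : d₂ ≤ d₁) (h23 : d₃ ≤ d₂) (h3 : 2 ≤ d₃) :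
    (∀ a b c : ℤ, ({a, b, c} : Multiset ℤ) = ({d₁, d₂, d₃} : Multiset ℤ) →
      (d₁ - 1) ^ 2 + (d₃ - 1) ^ 2 + (d₂ - 1) * (d₂ - 2) + (d₁ - d₃) ≤ f3 a b c) ∧
    f3 d₁ d₂ d₃ = (d₁ - 1) ^ 2 + (d₃ - 1) ^ 2 + (d₂ - 1) * (d₂ - 2) + (d₁ - d₃) := by
  constructor
  · intro a b c h
    rcases triple_eq h with ⟨rfl,rfl,rfl⟩|⟨rfl,rfl,rfl⟩|⟨rfl,rfl,rfl⟩|⟨rfl,rfl,rfl⟩|⟨rfl,rfl,rfl⟩|⟨rfl,rfl,rfl⟩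
    · simp only [f3]
      rw [abs_of_nonneg (by linarith), abs_of_nonneg (by linarith)]
      nlinarith
    · simp only [f3]
      rw [abs_of_nonneg (by linarith), abs_of_nonpos (by linarith)]
      nlinarith
    · simp only [f3]
      rw [abs_of_nonpos (by linarith), abs_of_nonneg (by linarith)]
      nlinarith
    · simp only [f3]
      rw [abs_of_nonneg (by linarith), abs_of_nonpos (by linarith)]
      nlinarith
    · simp only [f3]
      rw [abs_of_nonpos (by linarith), abs_of_nonneg (by linarith)]
      nlinarith
    · simp only [f3]
      rw [abs_of_nonpos (by linarith), abs_of_nonpos (by linarith)]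
      nlinarith
  · simp only [f3]
    rw [abs_of_nonneg (by linarith), abs_of_nonneg (by linarith)]
    ring
end

section
/- Let d_1 ≥ d_2 ≥ d_3 ≥ 2 be integers and define, for an arrangement (a, b, c) of (d_1, d_2, d_3), f(a, b, c) = (a − 1)² + (c − 1)² + (b − 1)(b − 2) + |a − b| + |b − c| (the Albertson index of the caterpillar whose three spine vertices have degrees a, b, c in this order along the spine). Then for every permutation (a, b, c) of (d_1, d_2, d_3), f(a, b, c) ≤ (d_1 − 1)² + (d_2 − 1)² + (d_3 − 1)(d_3 − 2) + (d_1 − d_3) + (d_2 − d_3), and this upper bound is attained by the arrangement (d_1, d_3, d_2). -/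
lemma swap_eq {x y z : ℤ} (h : (x ::ₘ ({y} : Multiset ℤ)) = z ::ₘ {x}) : y = z := by
  have hy : y ∈ (z ::ₘ ({x} : Multiset ℤ)) := h ▸ (by simp)
  simp only [Multiset.mem_cons, Multiset.mem_singleton] at hy
  rcases hy with hy | hy
  · exact hy
  · subst hy
    have hz : z ∈ (y ::ₘ ({y} : Multiset ℤ)) := h ▸ (by simp)
    simp only [Multiset.mem_cons, Multiset.mem_singleton, or_self] at hz
    exact hz.symm

lemma perm2 {b c e f : ℤ} (h : ({b, c} : Multiset ℤ) = {e, f}) :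
    (b = e ∧ c = f) ∨ (b = f ∧ c = e) := by
  have hb : b ∈ ({e, f} : Multiset ℤ) := h ▸ (by simp)
  simp only [Multiset.insert_eq_cons, Multiset.mem_cons, Multiset.mem_singleton] at hb
  rcases hb with hb | hb
  · left
    refine ⟨hb, ?_⟩
    subst hb
    rw [Multiset.insert_eq_cons, Multiset.insert_eq_cons, Multiset.cons_inj_right] at h
    simpa using h
  · right
    refine ⟨hb, ?_⟩
    subst hb
    exact swap_eq (by simpa [Multiset.insert_eq_cons] using h)

lemma pairswap (x y : ℤ) : (x ::ₘ ({y} : Multiset ℤ)) = y ::ₘ {x} :=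
  Multiset.cons_swap x y 0

lemma perm3 {a b c d₁ d₂ d₃ : ℤ} (h : ({a, b, c} : Multiset ℤ) = {d₁, d₂, d₃}) :
    (a = d₁ ∧ b = d₂ ∧ c = d₃) ∨ (a = d₁ ∧ b = d₃ ∧ c = d₂) ∨
    (a = d₂ ∧ b = d₁ ∧ c = d₃) ∨ (a = d₂ ∧ b = d₃ ∧ c = d₁) ∨
    (a = d₃ ∧ b = d₁ ∧ c = d₂) ∨ (a = d₃ ∧ b = d₂ ∧ c = d₁) := by
  simp only [Multiset.insert_eq_cons] at h
  have ha : a ∈ (d₁ ::ₘ d₂ ::ₘ ({d₃} : Multiset ℤ)) := h ▸ (by simp)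
  simp only [Multiset.mem_cons, Multiset.mem_singleton] at ha
  rcases ha with ha | ha | ha
  · rw [ha, Multiset.cons_inj_right] at h
    rcases perm2 h with ⟨h1, h2⟩ | ⟨h1, h2⟩ <;> tauto
  · rw [ha, Multiset.cons_swap d₁ d₂, Multiset.cons_inj_right] at h
    rcases perm2 h with ⟨h1, h2⟩ | ⟨h1, h2⟩ <;> tauto
  · rw [ha, pairswap d₂ d₃, Multiset.cons_swap d₁ d₃, Multiset.cons_inj_right] at h
    rcases perm2 h with ⟨h1, h2⟩ | ⟨h1, h2⟩ <;> tauto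

/-- For `d₁ ≥ d₂ ≥ d₃ ≥ 2`, every arrangement `(a,b,c)` of `(d₁,d₂,d₃)` satisfies
`f(a,b,c) ≤ (d₁−1)² + (d₂−1)² + (d₃−1)(d₃−2) + (d₁−d₃) + (d₂−d₃)`, and equality is
attained by `(d₁,d₃,d₂)`. -/
theorem f3_upper_bound (d₁ d₂ d₃ : ℤ) (h12 : d₂ ≤ d₁) (h23 : d₃ ≤ d₂) (h3 : 2 ≤ d₃) :
    (∀ a b c : ℤ, ({a, b, c} : Multiset ℤ) = ({d₁, d₂, d₃} : Multiset ℤ) →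
      f3 a b c ≤ (d₁ - 1) ^ 2 + (d₂ - 1) ^ 2 + (d₃ - 1) * (d₃ - 2) + (d₁ - d₃) + (d₂ - d₃)) ∧
    f3 d₁ d₃ d₂ = (d₁ - 1) ^ 2 + (d₂ - 1) ^ 2 + (d₃ - 1) * (d₃ - 2) + (d₁ - d₃) + (d₂ - d₃) := by
  constructor
  · intro a b c h
    rcases perm3 h with ⟨ha, hb, hc⟩ | ⟨ha, hb, hc⟩ | ⟨ha, hb, hc⟩ |
      ⟨ha, hb, hc⟩ | ⟨ha, hb, hc⟩ | ⟨ha, hb, hc⟩ <;> subst ha <;> subst hb <;> subst hc <;>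
      unfold f3
    · rw [abs_of_nonneg (by linarith), abs_of_nonneg (by linarith)]; nlinarith
    · rw [abs_of_nonneg (by linarith), abs_of_nonpos (by linarith)]; nlinarith
    · rw [abs_of_nonpos (by linarith), abs_of_nonneg (by linarith)]; nlinarith
    · rw [abs_of_nonneg (by linarith), abs_of_nonpos (by linarith)]; nlinarith
    · rw [abs_of_nonpos (by linarith), abs_of_nonneg (by linarith)]; nlinarith
    · rw [abs_of_nonpos (by linarith), abs_of_nonpos (by linarith)]; nlinarith
  · unfold f3
    rw [abs_of_nonneg (by linarith), abs_of_nonpos (by linarith)]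
    ring
end

section
/- Let n ≥ 2 and let d_1 ≤ d_2 ≤ … ≤ d_n be integers with all d_i ≥ 2. For a sequence (e_1, …, e_n), define F(e) = (e_1 − 1)² + (e_n − 1)² + Σ_{i=2}^{n−1} (e_i − 1)(e_i − 2) + Σ_{i=1}^{n−1} |e_i − e_{i+1}| (the Albertson index of the caterpillar with spine degree sequence e). Then for every permutation σ of {1, …, n}, F(d_1, …, d_n) ≤ F(d_{σ(1)}, …, d_{σ(n)}); that is, the non-decreasing arrangement minimizes the Albertson index among all caterpillar trees whose spine degree sequence is a rearrangement of (d_1, …, d_n). -/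
open Finset

/-- Albertson index of a caterpillar whose spine degrees along the spine are
`e 0, e 1, …, e (n−1)`:
`F(e) = (e_1 − 1)² + (e_n − 1)² + Σ_{i=2}^{n−1} (e_i − 1)(e_i − 2) + Σ_{i=1}^{n−1} |e_i − e_{i+1}|`. -/
def caterpillarIrr (n : ℕ) (e : ℕ → ℤ) : ℤ :=
  (e 0 - 1) ^ 2 + (e (n - 1) - 1) ^ 2 +
    ∑ i ∈ Finset.Ico 1 (n - 1), (e i - 1) * (e i - 2) +
    ∑ i ∈ Finset.range (n - 1), |e i - e (i + 1)|

lemma telescope_abs (e : ℕ → ℤ) (a : ℕ) :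
    ∀ b, a ≤ b → |e b - e a| ≤ ∑ i ∈ Finset.Ico a b, |e i - e (i + 1)| := by
  intro b
  induction b with
  | zero =>
    intro h
    interval_cases a
    simp
  | succ c ih =>
    intro h
    rcases Nat.lt_or_ge a (c + 1) with h' | h'
    · have hac : a ≤ c := Nat.lt_succ_iff.mp h'
      rw [Finset.sum_Ico_succ_top hac]
      have := ih hac
      have htri : |e (c + 1) - e a| ≤ |e c - e a| + |e c - e (c + 1)| := by
        rw [abs_sub_comm (e c) (e (c+1))]
        calc |e (c + 1) - e a| = |(e c - e a) + (e (c+1) - e c)| := by ring_nf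
          _ ≤ |e c - e a| + |e (c+1) - e c| := abs_add_le _ _
      linarith
    · have : a = c + 1 := le_antisymm h h'
      subst this
      simp

lemma irr_eq (n : ℕ) (hn : 2 ≤ n) (e : ℕ → ℤ) :
    caterpillarIrr n e = (∑ i ∈ Finset.range n, (e i - 1) * (e i - 2)) +
      ((e 0 - 1) + (e (n - 1) - 1)) +
      ∑ i ∈ Finset.range (n - 1), |e i - e (i + 1)| := by
  have h1 : 1 ≤ n - 1 := by omega
  have h2 : n = (n - 1) + 1 := by omega
  have hsplit : ∑ i ∈ Finset.range n, (e i - 1) * (e i - 2)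
      = (e 0 - 1) * (e 0 - 2) + (∑ i ∈ Finset.Ico 1 (n - 1), (e i - 1) * (e i - 2))
        + (e (n - 1) - 1) * (e (n - 1) - 2) := by
    rw [Finset.range_eq_Ico, h2, Finset.sum_Ico_succ_top (by omega : 0 ≤ n - 1),
      Finset.sum_eq_sum_Ico_succ_bot (by omega : 0 < n - 1)]
    norm_num
  unfold caterpillarIrr
  rw [hsplit]
  ring

/-- For `n ≥ 2` and a non-decreasing sequence `d_1 ≤ … ≤ d_n` of integers all `≥ 2`,
the non-decreasing arrangement minimizes the Albertson index among all caterpillar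
trees whose spine degree sequence is a rearrangement of `(d_1, …, d_n)`. -/
theorem sorted_arrangement_minimizes_caterpillarIrr (n : ℕ) (hn : 2 ≤ n)
    (d : ℕ → ℤ) (hmono : ∀ i j, i ≤ j → j < n → d i ≤ d j)
    (h2 : ∀ i, i < n → 2 ≤ d i) :
    ∀ σ : Equiv.Perm ℕ, (∀ i, n ≤ i → σ i = i) →
      caterpillarIrr n d ≤ caterpillarIrr n (d ∘ σ) := by
  intro σ hσ
  set e : ℕ → ℤ := d ∘ σ with he
  have hσlt : ∀ i, i < n → σ i < n := by
    intro i hi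
    by_contra h
    push_neg at h
    have h1 : σ (σ i) = σ i := hσ (σ i) h
    have : σ i = i := σ.injective h1
    omega
  have hσslt : ∀ i, i < n → σ.symm i < n := by
    intro i hi
    by_contra h
    push_neg at h
    have h1 : σ (σ.symm i) = σ.symm i := hσ _ h
    rw [Equiv.apply_symm_apply] at h1
    omega
  -- quadratic part is permutation invariant
  have hquad : ∑ i ∈ Finset.range n, (e i - 1) * (e i - 2)
      = ∑ i ∈ Finset.range n, (d i - 1) * (d i - 2) := by
    apply Finset.sum_nbij' (fun i => σ i) (fun i => σ.symm i)
    · intro a ha; exact Finset.mem_range.mpr (hσlt a (Finset.mem_range.mp ha))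
    · intro a ha; exact Finset.mem_range.mpr (hσslt a (Finset.mem_range.mp ha))
    · intro a _; exact σ.symm_apply_apply a
    · intro a _; exact σ.apply_symm_apply a
    · intro a _; rfl
  rw [irr_eq n hn d, irr_eq n hn e, hquad]
  -- sorted telescoping sum
  have hsorted : ∑ i ∈ Finset.range (n - 1), |d i - d (i + 1)| = d (n - 1) - d 0 := by
    have hc : ∀ i ∈ Finset.range (n - 1), |d i - d (i + 1)| = d (i + 1) - d i := by
      intro i hi
      have hi' : i < n - 1 := Finset.mem_range.mp hi
      have : d i ≤ d (i + 1) := hmono i (i + 1) (by omega) (by omega)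
      rw [abs_sub_comm, abs_of_nonneg (by linarith)]
    rw [Finset.sum_congr rfl hc, Finset.sum_range_sub]
  -- the maximum sits at position k in the permuted sequence
  set k : ℕ := σ.symm (n - 1) with hk
  have hkn : k < n := hσslt (n - 1) (by omega)
  have hek : e k = d (n - 1) := by
    simp [he, hk, Equiv.apply_symm_apply]
  have hb1 : |e k - e 0| ≤ ∑ i ∈ Finset.Ico 0 k, |e i - e (i + 1)| :=
    telescope_abs e 0 k (Nat.zero_le k)
  have hb2 : |e (n - 1) - e k| ≤ ∑ i ∈ Finset.Ico k (n - 1), |e i - e (i + 1)| :=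
    telescope_abs e k (n - 1) (by omega)
  have hsplit : ∑ i ∈ Finset.range (n - 1), |e i - e (i + 1)|
      = (∑ i ∈ Finset.Ico 0 k, |e i - e (i + 1)|)
        + ∑ i ∈ Finset.Ico k (n - 1), |e i - e (i + 1)| := by
    rw [Finset.range_eq_Ico, ← Finset.sum_Ico_consecutive _ (Nat.zero_le k) (by omega)]
  have ha1 : e k - e 0 ≤ |e k - e 0| := le_abs_self _
  have ha2 : e k - e (n - 1) ≤ |e (n - 1) - e k| := by
    rw [abs_sub_comm]; exact le_abs_self _
  rw [hsorted, hsplit]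
  linarith
end

section
/- Let d_1 ≥ d_2 ≥ d_3 ≥ d_4 ≥ 2 be integers and define, for an arrangement (a, b, c, d) of (d_1, d_2, d_3, d_4), f(a, b, c, d) = (a − 1)² + (d − 1)² + (b − 1)(b − 2) + (c − 1)(c − 2) + |a − b| + |b − c| + |c − d| (the Albertson index of the caterpillar whose four spine vertices have degrees a, b, c, d in this order along the spine). Then for every permutation (a, b, c, d) of (d_1, d_2, d_3, d_4), f(a, b, c, d) ≤ Σ_{i=1}^{4} (d_i − 1)² + d_1 + d_2 − d_3 − 3d_4 + 2, and this upper bound is attained (for instance by the arrangement (d_1, d_4, d_3, d_2)). -/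
lemma perm2_s14 {α : Type*} {a b x y : α} (h : ({a, b} : Multiset α) = {x, y}) :
    a = x ∧ b = y ∨ a = y ∧ b = x := by
  have ha : a ∈ ({x, y} : Multiset α) := h ▸ by simp
  simp at ha
  simp only [Multiset.insert_eq_cons, ← Multiset.cons_zero] at h ⊢
  rcases ha with rfl | rfl
  · left
    rw [Multiset.cons_inj_right] at h
    simpa using h
  · right
    rw [Multiset.cons_swap x a, Multiset.cons_inj_right] at h
    simpa using h
  
lemma perm3_s14 {α : Type*} {a b c x y z : α} (h : ({a, b, c} : Multiset α) = {x, y, z}) :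
    a = x ∧ ({b, c} : Multiset α) = {y, z} ∨
    a = y ∧ ({b, c} : Multiset α) = {x, z} ∨
    a = z ∧ ({b, c} : Multiset α) = {x, y} := by
  have ha : a ∈ ({x, y, z} : Multiset α) := h ▸ by simp
  simp at ha
  simp only [Multiset.insert_eq_cons, ← Multiset.cons_zero] at h ⊢
  rcases ha with rfl | rfl | rfl
  · left; exact ⟨rfl, by rwa [Multiset.cons_inj_right] at h⟩
  · right; left
    rw [Multiset.cons_swap x a, Multiset.cons_inj_right] at h
    exact ⟨rfl, h⟩
  · right; right
    rw [Multiset.cons_swap y a, Multiset.cons_swap x a, Multiset.cons_inj_right] at h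
    exact ⟨rfl, h⟩

lemma perm4 {α : Type*} {a b c d x y z w : α}
    (h : ({a, b, c, d} : Multiset α) = {x, y, z, w}) :
    a = x ∧ ({b, c, d} : Multiset α) = {y, z, w} ∨
    a = y ∧ ({b, c, d} : Multiset α) = {x, z, w} ∨
    a = z ∧ ({b, c, d} : Multiset α) = {x, y, w} ∨
    a = w ∧ ({b, c, d} : Multiset α) = {x, y, z} := by
  have ha : a ∈ ({x, y, z, w} : Multiset α) := h ▸ by simp
  simp at ha
  simp only [Multiset.insert_eq_cons, ← Multiset.cons_zero] at h ⊢
  rcases ha with rfl | rfl | rfl | rfl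
  · left; exact ⟨rfl, by rwa [Multiset.cons_inj_right] at h⟩
  · right; left
    rw [Multiset.cons_swap x a, Multiset.cons_inj_right] at h
    exact ⟨rfl, h⟩
  · right; right; left
    rw [Multiset.cons_swap y a, Multiset.cons_swap x a, Multiset.cons_inj_right] at h
    exact ⟨rfl, h⟩
  · right; right; right
    rw [Multiset.cons_swap z a, Multiset.cons_swap y a, Multiset.cons_swap x a,
      Multiset.cons_inj_right] at h
    exact ⟨rfl, h⟩



/-- Albertson index of a caterpillar with four spine vertices of degrees `a, b, c, d`
in order along the spine. -/
def f4 (a b c d : ℤ) : ℤ :=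
  (a - 1) ^ 2 + (d - 1) ^ 2 + (b - 1) * (b - 2) + (c - 1) * (c - 2) +
    |a - b| + |b - c| + |c - d|

/-- For `d₁ ≥ d₂ ≥ d₃ ≥ d₄ ≥ 2`, every arrangement `(a,b,c,d)` of `(d₁,d₂,d₃,d₄)`
satisfies `f(a,b,c,d) ≤ Σ (dᵢ−1)² + d₁ + d₂ − d₃ − 3d₄ + 2`, and this upper bound
is attained by the arrangement `(d₁,d₄,d₃,d₂)`. -/
theorem f4_upper_bound (d₁ d₂ d₃ d₄ : ℤ)
    (h12 : d₂ ≤ d₁) (h23 : d₃ ≤ d₂) (h34 : d₄ ≤ d₃) (h4 : 2 ≤ d₄) :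
    (∀ a b c d : ℤ, ({a, b, c, d} : Multiset ℤ) = ({d₁, d₂, d₃, d₄} : Multiset ℤ) →
      f4 a b c d ≤ (d₁ - 1) ^ 2 + (d₂ - 1) ^ 2 + (d₃ - 1) ^ 2 + (d₄ - 1) ^ 2 +
        d₁ + d₂ - d₃ - 3 * d₄ + 2) ∧
    f4 d₁ d₄ d₃ d₂ = (d₁ - 1) ^ 2 + (d₂ - 1) ^ 2 + (d₃ - 1) ^ 2 + (d₄ - 1) ^ 2 +
      d₁ + d₂ - d₃ - 3 * d₄ + 2 := by
  have q : ∀ x : ℤ, (x - 1) * (x - 2) = (x - 1) ^ 2 - (x - 1) := fun x => by ring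
  have e12 : |d₁ - d₂| = d₁ - d₂ := abs_of_nonneg (by linarith)
  have e21 : |d₂ - d₁| = d₁ - d₂ := by rw [abs_sub_comm]; exact e12
  have e13 : |d₁ - d₃| = d₁ - d₃ := abs_of_nonneg (by linarith)
  have e31 : |d₃ - d₁| = d₁ - d₃ := by rw [abs_sub_comm]; exact e13
  have e14 : |d₁ - d₄| = d₁ - d₄ := abs_of_nonneg (by linarith)
  have e41 : |d₄ - d₁| = d₁ - d₄ := by rw [abs_sub_comm]; exact e14
  have e23 : |d₂ - d₃| = d₂ - d₃ := abs_of_nonneg (by linarith)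
  have e32 : |d₃ - d₂| = d₂ - d₃ := by rw [abs_sub_comm]; exact e23
  have e24 : |d₂ - d₄| = d₂ - d₄ := abs_of_nonneg (by linarith)
  have e42 : |d₄ - d₂| = d₂ - d₄ := by rw [abs_sub_comm]; exact e24
  have e34 : |d₃ - d₄| = d₃ - d₄ := abs_of_nonneg (by linarith)
  have e43 : |d₄ - d₃| = d₃ - d₄ := by rw [abs_sub_comm]; exact e34
  have e11 : |d₁ - d₁| = d₁ - d₁ := by simp
  have e22 : |d₂ - d₂| = d₂ - d₂ := by simp
  have e33 : |d₃ - d₃| = d₃ - d₃ := by simp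
  have e44 : |d₄ - d₄| = d₄ - d₄ := by simp
  constructor
  · intro a b c d h
    rcases perm4 h with ⟨rfl, h3⟩ | ⟨rfl, h3⟩ | ⟨rfl, h3⟩ | ⟨rfl, h3⟩ <;>
      rcases perm3_s14 h3 with ⟨rfl, h2⟩ | ⟨rfl, h2⟩ | ⟨rfl, h2⟩ <;>
      rcases perm2_s14 h2 with ⟨rfl, rfl⟩ | ⟨rfl, rfl⟩ <;>
      simp only [f4, q, e12, e21, e13, e31, e14, e41, e23, e32, e24, e42, e34, e43,
        e11, e22, e33, e44] <;>
      linarith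
  · simp only [f4, q, e14, e43, e32]
    ring
end

section
/- Let d_1 ≥ d_2 ≥ d_3 ≥ d_4 ≥ 2 be integers and define, for an arrangement (a, b, c, d) of (d_1, d_2, d_3, d_4), f(a, b, c, d) = (a − 1)² + (d − 1)² + (b − 1)(b − 2) + (c − 1)(c − 2) + |a − b| + |b − c| + |c − d| (the Albertson index of the caterpillar whose four spine vertices have degrees a, b, c, d in this order along the spine). Then for every permutation (a, b, c, d) of (d_1, d_2, d_3, d_4), f(a, b, c, d) ≥ Σ_{i=1}^{4} (d_i − 1)² + d_1 − d_2 − d_3 − d_4 + 2, and this lower bound is attained by the arrangement (d_1, d_2, d_3, d_4). -/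
/-- For `d₁ ≥ d₂ ≥ d₃ ≥ d₄ ≥ 2`, every arrangement `(a,b,c,d)` of `(d₁,d₂,d₃,d₄)`
satisfies `f(a,b,c,d) ≥ Σ (dᵢ−1)² + d₁ − d₂ − d₃ − d₄ + 2`, and this lower bound
is attained by the arrangement `(d₁,d₂,d₃,d₄)`. -/
theorem f4_lower_bound (d₁ d₂ d₃ d₄ : ℤ)
    (h12 : d₂ ≤ d₁) (h23 : d₃ ≤ d₂) (h34 : d₄ ≤ d₃) (h4 : 2 ≤ d₄) :
    (∀ a b c d : ℤ, ({a, b, c, d} : Multiset ℤ) = ({d₁, d₂, d₃, d₄} : Multiset ℤ) →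
      (d₁ - 1) ^ 2 + (d₂ - 1) ^ 2 + (d₃ - 1) ^ 2 + (d₄ - 1) ^ 2 +
        d₁ - d₂ - d₃ - d₄ + 2 ≤ f4 a b c d) ∧
    f4 d₁ d₂ d₃ d₄ = (d₁ - 1) ^ 2 + (d₂ - 1) ^ 2 + (d₃ - 1) ^ 2 + (d₄ - 1) ^ 2 +
      d₁ - d₂ - d₃ - d₄ + 2 := by
  constructor
  · intro a b c d h
    -- sum identity
    have hsum : a + (b + (c + d)) = d₁ + (d₂ + (d₃ + d₄)) := by
      have := congrArg Multiset.sum h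
      simpa using this
    -- sum of squares identity
    have hsq : (a - 1) ^ 2 + ((b - 1) ^ 2 + ((c - 1) ^ 2 + (d - 1) ^ 2)) =
        (d₁ - 1) ^ 2 + ((d₂ - 1) ^ 2 + ((d₃ - 1) ^ 2 + (d₄ - 1) ^ 2)) := by
      have := congrArg (fun s : Multiset ℤ => (s.map (fun x => (x - 1) ^ 2)).sum) h
      simpa using this
    -- d₁ is one of a, b, c, d
    have hmem : d₁ = a ∨ d₁ = b ∨ d₁ = c ∨ d₁ = d := by
      have : d₁ ∈ ({a, b, c, d} : Multiset ℤ) := by rw [h]; simp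
      simpa using this
    -- every element is ≤ d₁
    have hle : ∀ x : ℤ, x ∈ ({a, b, c, d} : Multiset ℤ) → x ≤ d₁ := by
      intro x hx
      rw [h] at hx
      simp only [Multiset.insert_eq_cons, Multiset.mem_cons, Multiset.mem_singleton] at hx
      rcases hx with rfl | rfl | rfl | rfl <;> linarith
    have ha : a ≤ d₁ := hle a (by simp)
    have hd : d ≤ d₁ := hle d (by simp)
    have h1 : a - b ≤ |a - b| := le_abs_self _
    have h2 : b - a ≤ |a - b| := by rw [abs_sub_comm]; exact le_abs_self _
    have h3 : b - c ≤ |b - c| := le_abs_self _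
    have h4' : c - b ≤ |b - c| := by rw [abs_sub_comm]; exact le_abs_self _
    have h5 : c - d ≤ |c - d| := le_abs_self _
    have h6 : d - c ≤ |c - d| := by rw [abs_sub_comm]; exact le_abs_self _
    unfold f4
    rcases hmem with rfl | rfl | rfl | rfl <;> nlinarith [hsq, hsum]
  · have e1 : |d₁ - d₂| = d₁ - d₂ := abs_of_nonneg (by linarith)
    have e2 : |d₂ - d₃| = d₂ - d₃ := abs_of_nonneg (by linarith)
    have e3 : |d₃ - d₄| = d₃ - d₄ := abs_of_nonneg (by linarith)
    unfold f4
    rw [e1, e2, e3]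
    ring
end
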